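/- arXiv:1708.00357 — 5 statements merged into one kernel-verified Lean document; each statement's English description precedes it below -/
import Mathlib

section
/- Let X be a bornological V-module with family of bounded subsets 𝓑. Then: (i) a sequence in X converges if and only if it is contained in some bounded V-submodule Y ⊆ X and converges in Y with respect to the π-adic topology; (ii) X is separated if and only if every bounded V-submodule of X is π-adically separated, if and only if the bounded π-adically separated V-submodules are cofinal in 𝓑 with respect to inclusion; (iii) X is complete if and only if the bounded π-adically complete V-submodules are cofinal in 𝓑. -/
open Pointwise

universe u v w

/-- A (convex) bornology on a `V`-module `X`: a family of *bounded* subsets containing all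
finite subsets, closed under subsets and finite unions, and such that the `V`-submodule
generated by a bounded subset is again bounded. -/
structure ModBornology (V : Type u) [CommRing V] (X : Type v) [AddCommGroup X] [Module V X] :
    Type v where
  IsBounded : Set X → Prop
  isBounded_of_finite : ∀ ⦃s : Set X⦄, s.Finite → IsBounded s
  isBounded_subset : ∀ ⦃s t : Set X⦄, IsBounded t → s ⊆ t → IsBounded s
  isBounded_union : ∀ ⦃s t : Set X⦄, IsBounded s → IsBounded t → IsBounded (s ∪ t)
  isBounded_span : ∀ ⦃s : Set X⦄, IsBounded s → IsBounded (Submodule.span V s : Set X)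

namespace Born

variable {V : Type u} [CommRing V] {X : Type v} [AddCommGroup X] [Module V X]
  {Y : Type w} [AddCommGroup Y] [Module V Y]

/-- `δ n → 0` in the `π`-adic topology on `V`. -/
def TendstoPiAdic (π : V) (δ : ℕ → V) : Prop :=
  ∀ m : ℕ, ∃ N : ℕ, ∀ n ≥ N, π ^ m ∣ δ n

/-- The sequence `x` `S`-converges to `l`. -/
def SConvTo (π : V) (S : Set X) (x : ℕ → X) (l : X) : Prop :=
  ∃ δ : ℕ → V, TendstoPiAdic π δ ∧ ∀ n : ℕ, x n - l ∈ δ n • S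

/-- The sequence `x` converges (bornologically) to `l`. -/
def ConvTo (π : V) (𝓑 : ModBornology V X) (x : ℕ → X) (l : X) : Prop :=
  ∃ S : Set X, 𝓑.IsBounded S ∧ SConvTo π S x l

/-- The sequence `x` is `S`-Cauchy. -/
def SCauchy (π : V) (S : Set X) (x : ℕ → X) : Prop :=
  ∃ δ : ℕ → V, TendstoPiAdic π δ ∧ ∀ l n m : ℕ, l ≤ n → l ≤ m → x n - x m ∈ δ l • S

/-- A bornological `V`-module is separated if limits of convergent sequences are unique. -/
def BornSeparated (π : V) (𝓑 : ModBornology V X) : Prop :=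
  ∀ (x : ℕ → X) (l₁ l₂ : X), ConvTo π 𝓑 x l₁ → ConvTo π 𝓑 x l₂ → l₁ = l₂

/-- A bornological `V`-module is complete if it is separated and every `S`-Cauchy sequence
`S'`-converges for some bounded `S'` depending only on `S`. -/
def BornComplete (π : V) (𝓑 : ModBornology V X) : Prop :=
  BornSeparated π 𝓑 ∧ ∀ S : Set X, 𝓑.IsBounded S → ∃ S' : Set X, 𝓑.IsBounded S' ∧
    ∀ x : ℕ → X, SCauchy π S x → ∃ l : X, SConvTo π S' x l

/-- A linear map is bounded if it maps bounded sets to bounded sets. -/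
def BoundedMap (𝓑X : ModBornology V X) (𝓑Y : ModBornology V Y) (f : X →ₗ[V] Y) : Prop :=
  ∀ ⦃s : Set X⦄, 𝓑X.IsBounded s → 𝓑Y.IsBounded (f '' s)

end Born

open Born

/-! The whole statement reduces to `π`-adic convergence inside bounded submodules: a sequence
that `S`-converges to `l` converges `π`-adically in the span of `S ∪ {l}`, and conversely a
`π`-adic limit inside a bounded submodule `Y` is a `Y`-limit, with `δₙ = π ^ eₙ` for the largest
`eₙ ≤ n` such that `xₙ - l ∈ π ^ eₙ • Y`. Uniqueness of limits is then `π`-adic separatedness.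

For completeness, let `T` be the span of a bounded set and `W` a bounded submodule containing `T`
and the limits of the Cauchy sequences of `T`. The `W`-limits of fast Cauchy sequences of `T` form
a bounded submodule `Y ⊇ T`, and `Y` is `π`-adically complete: if `tₖ → aₖ`, the diagonal
sequence `∑_{k<n} πᵏ tₖ(n)` converges to `∑ πᵏ aₖ`, its tails being `πᴷ` times diagonal
sequences of the same kind. -/

open Filter

namespace Born

variable {V : Type u} [CommRing V] {X : Type v} [AddCommGroup X] [Module V X] {π : V}

section PiAdic

variable {Y : Submodule V X}

lemma pow_smul_le_pow_smul {a b : ℕ} (hba : b ≤ a) : π ^ a • Y ≤ π ^ b • Y := by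
  intro x hx
  obtain ⟨y, hy, rfl⟩ := (Submodule.mem_smul_pointwise_iff_exists _ _ _).1 hx
  obtain ⟨c, rfl⟩ := Nat.exists_eq_add_of_le hba
  rw [pow_add, mul_smul]
  exact Submodule.smul_mem_pointwise_smul _ _ _ (Y.smul_mem _ hy)

lemma mem_pow_smul_of_dvd {S : Set X} (hSY : S ⊆ Y) {m : ℕ} {d : V} (hd : π ^ m ∣ d) {z : X}
    (hz : z ∈ d • S) : z ∈ π ^ m • Y := by
  rw [Set.mem_smul_set] at hz
  obtain ⟨s, hs, rfl⟩ := hz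
  obtain ⟨c, rfl⟩ := hd
  rw [mul_smul]
  exact Submodule.smul_mem_pointwise_smul _ _ _ (Y.smul_mem c (hSY hs))

lemma smodEq_iff_sub_mem_pow_smul (y z : Y) (n : ℕ) :
    y ≡ z [SMOD (Ideal.span {π} ^ n • ⊤ : Submodule V Y)] ↔ (y : X) - z ∈ π ^ n • Y := by
  rw [SModEq.sub_mem, Ideal.span_singleton_pow, Submodule.ideal_span_singleton_smul,
    Submodule.mem_smul_pointwise_iff_exists, Submodule.mem_smul_pointwise_iff_exists]
  constructor
  · rintro ⟨w, -, hw⟩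
    exact ⟨w, w.2, congrArg Subtype.val hw⟩
  · rintro ⟨w, hw, hwyz⟩
    exact ⟨⟨w, hw⟩, trivial, Subtype.ext hwyz⟩

lemma isHausdorff_span_singleton_iff :
    IsHausdorff (Ideal.span {π}) Y ↔ ∀ x ∈ Y, (∀ n, x ∈ π ^ n • Y) → x = 0 := by
  constructor
  · intro h x hx hxn
    have := h.haus ⟨x, hx⟩ fun n => (smodEq_iff_sub_mem_pow_smul _ _ n).2 (by simpa using hxn n)
    simpa using congrArg Subtype.val this
  · intro h
    exact ⟨fun y hy => Subtype.ext
      (h y y.2 fun n => by simpa using (smodEq_iff_sub_mem_pow_smul _ _ n).1 (hy n))⟩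

lemma isPrecomplete_span_singleton_iff :
    IsPrecomplete (Ideal.span {π}) Y ↔ ∀ f : ℕ → X, (∀ n, f n ∈ Y) →
      (∀ m n, m ≤ n → f m - f n ∈ π ^ m • Y) → ∃ l ∈ Y, ∀ n, f n - l ∈ π ^ n • Y := by
  constructor
  · intro h f hfY hf
    obtain ⟨L, hL⟩ := h.prec (f := fun n => (⟨f n, hfY n⟩ : Y))
      fun hmn => (smodEq_iff_sub_mem_pow_smul _ _ _).2 (hf _ _ hmn)
    exact ⟨L, L.2, fun n => (smodEq_iff_sub_mem_pow_smul _ _ n).1 (hL n)⟩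
  · intro h
    refine ⟨fun {f} hf => ?_⟩
    obtain ⟨l, hlY, hl⟩ := h (fun n => f n) (fun n => (f n).2)
      fun m n hmn => (smodEq_iff_sub_mem_pow_smul _ _ _).1 (hf hmn)
    exact ⟨⟨l, hlY⟩, fun n => (smodEq_iff_sub_mem_pow_smul _ _ n).2 (hl n)⟩

lemma isPrecomplete_of_forall_exists_sum
    (h : ∀ a : ℕ → X, (∀ k, a k ∈ Y) →
      ∃ l ∈ Y, ∀ K, ∑ k ∈ Finset.range K, π ^ k • a k - l ∈ π ^ K • Y) :
    IsPrecomplete (Ideal.span {π}) Y := by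
  refine isPrecomplete_span_singleton_iff.2 fun f hfY hf => ?_
  have hstep : ∀ k, ∃ a ∈ Y, π ^ k • a = f (k + 1) - f k := fun k =>
    (Submodule.mem_smul_pointwise_iff_exists _ _ _).1
      (by simpa only [neg_sub] using neg_mem (hf k (k + 1) k.le_succ))
  choose a haY ha using hstep
  obtain ⟨l, hlY, hl⟩ := h a haY
  refine ⟨f 0 + l, add_mem (hfY 0) hlY, fun K => ?_⟩
  have hf_eq : f K = f 0 + ∑ k ∈ Finset.range K, π ^ k • a k := by
    rw [Finset.sum_congr rfl fun k _ => ha k, Finset.sum_range_sub]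
    abel
  rw [hf_eq]
  convert hl K using 1
  abel

def PiAdicTendsto (π : V) (Y : Submodule V X) (x : ℕ → X) (l : X) : Prop :=
  ∀ m : ℕ, ∀ᶠ n in atTop, x n - l ∈ π ^ m • Y

namespace PiAdicTendsto

variable {x x₁ x₂ : ℕ → X} {l l₁ l₂ : X}

lemma const (a : X) : PiAdicTendsto π Y (fun _ => a) a :=
  fun _ => Eventually.of_forall fun _ => by simp

lemma add (h₁ : PiAdicTendsto π Y x₁ l₁) (h₂ : PiAdicTendsto π Y x₂ l₂) :
    PiAdicTendsto π Y (fun n => x₁ n + x₂ n) (l₁ + l₂) := fun m => by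
  filter_upwards [h₁ m, h₂ m] with n hn₁ hn₂
  rw [add_sub_add_comm]
  exact add_mem hn₁ hn₂

lemma smul (c : V) (h : PiAdicTendsto π Y x l) :
    PiAdicTendsto π Y (fun n => c • x n) (c • l) := fun m => by
  filter_upwards [h m] with n hn
  rw [← smul_sub]
  exact Submodule.smul_mem _ c hn

lemma finset_sum {ι : Type*} (s : Finset ι) {x : ι → ℕ → X} {l : ι → X}
    (h : ∀ i ∈ s, PiAdicTendsto π Y (x i) (l i)) :
    PiAdicTendsto π Y (fun n => ∑ i ∈ s, x i n) (∑ i ∈ s, l i) := fun m => by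
  filter_upwards [(eventually_all_finset s).2 fun i hi => h i hi m] with n hn
  rw [← Finset.sum_sub_distrib]
  exact Submodule.sum_mem _ hn

lemma comp_add (h : PiAdicTendsto π Y x l) (k : ℕ) :
    PiAdicTendsto π Y (fun n => x (k + n)) l :=
  fun m => (tendsto_atTop_mono (Nat.le_add_left · k) tendsto_id).eventually (h m)

lemma unique (hY : IsHausdorff (Ideal.span {π}) Y) (h₁ : PiAdicTendsto π Y x l₁)
    (h₂ : PiAdicTendsto π Y x l₂) : l₁ = l₂ := by
  have hmem : ∀ m, l₁ - l₂ ∈ π ^ m • Y := fun m => by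
    obtain ⟨n, hn₁, hn₂⟩ := ((h₁ m).and (h₂ m)).exists
    simpa only [sub_sub_sub_cancel_left] using sub_mem hn₂ hn₁
  exact sub_eq_zero.1 (isHausdorff_span_singleton_iff.1 hY _ (by simpa using hmem 0) hmem)

lemma sConvTo (hmem : ∀ n, x n - l ∈ Y) (h : PiAdicTendsto π Y x l) :
    SConvTo π (Y : Set X) x l := by
  classical
  let e n := Nat.findGreatest (fun m => x n - l ∈ π ^ m • Y) n
  refine ⟨fun n => π ^ e n, fun m => ?_, fun n => ?_⟩
  · obtain ⟨N, hN⟩ := eventually_atTop.1 (h m)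
    exact ⟨max N m, fun n hn => pow_dvd_pow π
      (Nat.le_findGreatest (le_of_max_le_right hn) (hN n (le_of_max_le_left hn)))⟩
  · exact (Submodule.mem_smul_pointwise_iff_exists _ _ _).1
      (Nat.findGreatest_spec (P := fun m => x n - l ∈ π ^ m • Y) (Nat.zero_le n)
        (by simpa using hmem n))

end PiAdicTendsto

lemma SConvTo.piAdicTendsto {S : Set X} (hSY : S ⊆ Y) {x : ℕ → X} {l : X}
    (h : SConvTo π S x l) : PiAdicTendsto π Y x l := by
  obtain ⟨δ, hδ, hx⟩ := h
  intro m
  obtain ⟨N, hN⟩ := hδ m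
  filter_upwards [eventually_ge_atTop N] with n hn
  exact mem_pow_smul_of_dvd hSY (hN n hn) (hx n)

lemma SCauchy.exists_sConvTo {S : Set X} (hSY : S ⊆ Y) (hY : IsPrecomplete (Ideal.span {π}) Y)
    {x : ℕ → X} (hx : SCauchy π S x) : ∃ l, SConvTo π (Y : Set X) x l := by
  obtain ⟨δ, hδ, hxδ⟩ := hx
  have hdiff : ∀ m k n n', π ^ m ∣ δ k → k ≤ n → k ≤ n' → x n - x n' ∈ π ^ m • Y :=
    fun m k n n' hd hn hn' => mem_pow_smul_of_dvd hSY hd (hxδ k n n' hn hn')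
  have hdiffY : ∀ n n', x n - x n' ∈ Y := fun n n' => by
    simpa using hdiff 0 0 n n' (by simp) (Nat.zero_le n) (Nat.zero_le n')
  obtain ⟨φ, hφ, hφδ⟩ := extraction_forall_of_eventually' hδ
  obtain ⟨L, hLY, hL⟩ := isPrecomplete_span_singleton_iff.1 hY (fun m => x (φ m) - x 0)
    (fun m => hdiffY _ _) fun m n hmn => by
      simpa only [sub_sub_sub_cancel_right] using
        hdiff m (φ m) (φ m) (φ n) (hφδ m) le_rfl (hφ.monotone hmn)
  have hx : PiAdicTendsto π Y x (x 0 + L) := fun m => by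
    filter_upwards [eventually_ge_atTop (φ m)] with n hn
    have hsplit : x n - (x 0 + L) = (x n - x (φ m)) + (x (φ m) - x 0 - L) := by abel
    rw [hsplit]
    exact add_mem (hdiff m (φ m) n (φ m) (hφδ m) hn le_rfl) (hL m)
  refine ⟨x 0 + L, hx.sConvTo fun n => ?_⟩
  rw [← sub_sub]
  exact sub_mem (hdiffY n 0) hLY

end PiAdic

section Bornological

variable {𝓑 : ModBornology V X}

lemma exists_convTo_iff (x : ℕ → X) :
    (∃ l, ConvTo π 𝓑 x l) ↔ ∃ Y : Submodule V X, 𝓑.IsBounded (Y : Set X) ∧ (∀ n, x n ∈ Y) ∧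
      ∃ l ∈ Y, PiAdicTendsto π Y x l := by
  constructor
  · rintro ⟨l, S, hS, hx⟩
    let Y := Submodule.span V (S ∪ {l})
    have hSY : S ⊆ Y := Set.subset_union_left.trans Submodule.subset_span
    have hlY : l ∈ Y := Submodule.subset_span (Or.inr rfl)
    refine ⟨Y, 𝓑.isBounded_span (𝓑.isBounded_union hS (𝓑.isBounded_of_finite
      (Set.finite_singleton l))), fun n => ?_, l, hlY, hx.piAdicTendsto hSY⟩
    obtain ⟨δ, -, hδ⟩ := hx
    obtain ⟨s, hs, hsx⟩ := hδ n
    rw [← sub_add_cancel (x n) l, ← hsx]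
    exact add_mem (Y.smul_mem (δ n) (hSY hs)) hlY
  · rintro ⟨Y, hY, hxY, l, hlY, hx⟩
    exact ⟨l, Y, hY, hx.sConvTo fun n => sub_mem (hxY n) hlY⟩

lemma isHausdorff_of_bornSeparated (hs : BornSeparated π 𝓑) {Y : Submodule V X}
    (hY : 𝓑.IsBounded (Y : Set X)) : IsHausdorff (Ideal.span {π}) Y := by
  refine isHausdorff_span_singleton_iff.2 fun y hy hyn => ?_
  have hy₀ : PiAdicTendsto π Y (fun _ => 0) y :=
    fun m => Eventually.of_forall fun _ => by simpa using hyn m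
  exact hs (fun _ => 0) y 0 ⟨Y, hY, hy₀.sConvTo fun _ => by simpa using hy⟩
    ⟨Y, hY, (PiAdicTendsto.const 0).sConvTo fun _ => by simp⟩

lemma bornSeparated_of_cofinal_isHausdorff
    (h : ∀ S : Set X, 𝓑.IsBounded S → ∃ Y : Submodule V X,
      𝓑.IsBounded (Y : Set X) ∧ S ⊆ (Y : Set X) ∧ IsHausdorff (Ideal.span {π}) Y) :
    BornSeparated π 𝓑 := by
  rintro x l₁ l₂ ⟨S₁, hS₁, h₁⟩ ⟨S₂, hS₂, h₂⟩
  obtain ⟨Y, -, hSY, hY⟩ := h _ (𝓑.isBounded_union hS₁ hS₂)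
  exact (h₁.piAdicTendsto (Set.subset_union_left.trans hSY)).unique hY
    (h₂.piAdicTendsto (Set.subset_union_right.trans hSY))

end Bornological

lemma bornComplete_of_cofinal_isAdicComplete {𝓑 : ModBornology V X}
    (h : ∀ S : Set X, 𝓑.IsBounded S → ∃ Y : Submodule V X,
      𝓑.IsBounded (Y : Set X) ∧ S ⊆ (Y : Set X) ∧ IsAdicComplete (Ideal.span {π}) Y) :
    BornComplete π 𝓑 := by
  refine ⟨bornSeparated_of_cofinal_isHausdorff fun S hS => ?_, fun S hS => ?_⟩
  · obtain ⟨Y, hYb, hSY, hY⟩ := h S hS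
    exact ⟨Y, hYb, hSY, hY.toIsHausdorff⟩
  · obtain ⟨Y, hYb, hSY, hY⟩ := h S hS
    exact ⟨Y, hYb, fun x hx => hx.exists_sConvTo hSY hY.toIsPrecomplete⟩

section FastCauchy

variable {T W : Submodule V X}

def IsFastCauchy (π : V) (T : Submodule V X) (t : ℕ → X) : Prop :=
  ∀ n, t n ∈ T ∧ t (n + 1) - t n ∈ π ^ n • T

namespace IsFastCauchy

variable {t t₁ t₂ : ℕ → X}

lemma const {a : X} (ha : a ∈ T) : IsFastCauchy π T fun _ => a :=
  fun _ => ⟨ha, by simp⟩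

lemma add (h₁ : IsFastCauchy π T t₁) (h₂ : IsFastCauchy π T t₂) :
    IsFastCauchy π T fun n => t₁ n + t₂ n := fun n => by
  refine ⟨add_mem (h₁ n).1 (h₂ n).1, ?_⟩
  rw [add_sub_add_comm]
  exact add_mem (h₁ n).2 (h₂ n).2

lemma smul (c : V) (h : IsFastCauchy π T t) : IsFastCauchy π T fun n => c • t n := fun n => by
  refine ⟨T.smul_mem c (h n).1, ?_⟩
  rw [← smul_sub]
  exact Submodule.smul_mem _ c (h n).2

lemma comp_add (h : IsFastCauchy π T t) (k : ℕ) : IsFastCauchy π T fun n => t (k + n) :=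
  fun n => ⟨(h (k + n)).1, pow_smul_le_pow_smul (Nat.le_add_left n k) (h (k + n)).2⟩

lemma sub_mem_pow_smul (h : IsFastCauchy π T t) {l n : ℕ} (hln : l ≤ n) :
    t n - t l ∈ π ^ l • T := by
  obtain ⟨j, rfl⟩ := Nat.exists_eq_add_of_le hln
  have htel := Finset.sum_range_sub (fun i => t (l + i)) j
  simp only [add_zero] at htel
  rw [← htel]
  exact Submodule.sum_mem _ fun i _ =>
    pow_smul_le_pow_smul (Nat.le_add_right l i) (h (l + i)).2

lemma sCauchy (h : IsFastCauchy π T t) : SCauchy π (T : Set X) t := by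
  refine ⟨fun l => π ^ l, fun m => ⟨m, fun n hn => pow_dvd_pow π hn⟩, fun l n n' hn hn' => ?_⟩
  have := sub_mem (h.sub_mem_pow_smul hn) (h.sub_mem_pow_smul hn')
  rw [sub_sub_sub_cancel_right] at this
  exact (Submodule.mem_smul_pointwise_iff_exists _ _ _).1 this

end IsFastCauchy

def diagonalSum (π : V) (t : ℕ → ℕ → X) (n : ℕ) : X :=
  ∑ k ∈ Finset.range n, π ^ k • t k n

lemma isFastCauchy_diagonalSum {t : ℕ → ℕ → X} (ht : ∀ k, IsFastCauchy π T (t k)) :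
    IsFastCauchy π T (diagonalSum π t) := fun n => by
  refine ⟨Submodule.sum_mem _ fun k _ => T.smul_mem _ (ht k n).1, ?_⟩
  have hstep : diagonalSum π t (n + 1) - diagonalSum π t n =
      ∑ k ∈ Finset.range n, π ^ k • (t k (n + 1) - t k n) + π ^ n • t n (n + 1) := by
    simp only [diagonalSum, Finset.sum_range_succ, smul_sub, Finset.sum_sub_distrib]
    abel
  rw [hstep]
  exact add_mem (Submodule.sum_mem _ fun k _ => Submodule.smul_mem _ _ (ht k n).2)
    (Submodule.smul_mem_pointwise_smul _ _ _ (ht n (n + 1)).1)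

lemma diagonalSum_add (t : ℕ → ℕ → X) (K n : ℕ) :
    diagonalSum π t (K + n) = ∑ k ∈ Finset.range K, π ^ k • t k (K + n) +
      π ^ K • diagonalSum π (fun i m => t (K + i) (K + m)) n := by
  simp only [diagonalSum, Finset.sum_range_add, Finset.smul_sum, smul_smul, ← pow_add]

def fastLimits (π : V) (T W : Submodule V X) : Submodule V X where
  carrier := {l | ∃ t, IsFastCauchy π T t ∧ PiAdicTendsto π W t l}
  add_mem' := fun ⟨_, h₁, p₁⟩ ⟨_, h₂, p₂⟩ => ⟨_, h₁.add h₂, p₁.add p₂⟩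
  zero_mem' := ⟨_, .const T.zero_mem, .const 0⟩
  smul_mem' c _ := fun ⟨_, h, p⟩ => ⟨_, h.smul c, p.smul c⟩

lemma le_fastLimits : T ≤ fastLimits π T W := fun a ha => ⟨_, .const ha, .const a⟩

lemma fastLimits_le (hTW : T ≤ W) : fastLimits π T W ≤ W := by
  rintro l ⟨t, ht, hl⟩
  obtain ⟨n, hn⟩ := (hl 0).exists
  simpa using sub_mem (hTW (ht n).1) (by simpa using hn : t n - l ∈ W)

lemma exists_sum_sub_mem_fastLimits (hW : IsHausdorff (Ideal.span {π}) W)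
    (hlim : ∀ t, IsFastCauchy π T t → ∃ l, PiAdicTendsto π W t l)
    {a : ℕ → X} (ha : ∀ k, a k ∈ fastLimits π T W) :
    ∃ l ∈ fastLimits π T W,
      ∀ K, ∑ k ∈ Finset.range K, π ^ k • a k - l ∈ π ^ K • fastLimits π T W := by
  choose t ht hta using ha
  have hfast : ∀ K, IsFastCauchy π T (diagonalSum π fun i n => t (K + i) (K + n)) :=
    fun K => isFastCauchy_diagonalSum fun i => (ht (K + i)).comp_add K
  choose d hd using fun K => hlim _ (hfast K)
  obtain ⟨l, hl⟩ := hlim _ (isFastCauchy_diagonalSum ht)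
  refine ⟨l, ⟨_, isFastCauchy_diagonalSum ht, hl⟩, fun K => ?_⟩
  have hK : PiAdicTendsto π W (fun n => diagonalSum π t (K + n))
      (∑ k ∈ Finset.range K, π ^ k • a k + π ^ K • d K) := by
    simp_rw [diagonalSum_add]
    exact (PiAdicTendsto.finset_sum _ fun k _ => ((hta k).comp_add K).smul _).add ((hd K).smul _)
  rw [(hl.comp_add K).unique hW hK, sub_add_cancel_left]
  exact neg_mem (Submodule.smul_mem_pointwise_smul _ _ _ ⟨_, hfast K, hd K⟩)

end FastCauchy

lemma exists_isAdicComplete_superset {𝓑 : ModBornology V X} (hC : BornComplete π 𝓑) {S : Set X}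
    (hS : 𝓑.IsBounded S) : ∃ Y : Submodule V X,
      𝓑.IsBounded (Y : Set X) ∧ S ⊆ (Y : Set X) ∧ IsAdicComplete (Ideal.span {π}) Y := by
  obtain ⟨hsep, hcauchy⟩ := hC
  let T := Submodule.span V S
  have hT : 𝓑.IsBounded (T : Set X) := 𝓑.isBounded_span hS
  obtain ⟨S', hS', hS'T⟩ := hcauchy _ hT
  let W := Submodule.span V ((T : Set X) ∪ S')
  have hW : 𝓑.IsBounded (W : Set X) := 𝓑.isBounded_span (𝓑.isBounded_union hT hS')
  have hlim : ∀ t, IsFastCauchy π T t → ∃ l, PiAdicTendsto π W t l := fun t ht =>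
    (hS'T t ht.sCauchy).imp fun _ hl =>
      hl.piAdicTendsto (Set.subset_union_right.trans Submodule.subset_span)
  have hY : 𝓑.IsBounded (fastLimits π T W : Set X) :=
    𝓑.isBounded_subset hW (fastLimits_le (Set.subset_union_left.trans Submodule.subset_span))
  refine ⟨fastLimits π T W, hY, Submodule.subset_span.trans le_fastLimits, ?_⟩
  exact { toIsHausdorff := isHausdorff_of_bornSeparated hsep hY
          toIsPrecomplete := isPrecomplete_of_forall_exists_sum fun _ =>
            exists_sum_sub_mem_fastLimits (isHausdorff_of_bornSeparated hsep hW) hlim }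

end Born

theorem separated_complete_characterisation_general
    {V : Type u} [CommRing V]
    (π : V)
    {X : Type v} [AddCommGroup X] [Module V X] (𝓑 : ModBornology V X) :
    -- (i)
    ((∀ x : ℕ → X,
        (∃ l : X, ConvTo π 𝓑 x l) ↔
          ∃ Y : Submodule V X, 𝓑.IsBounded (Y : Set X) ∧ (∀ n, x n ∈ Y) ∧
            ∃ l ∈ Y, ∀ m : ℕ, ∃ N : ℕ, ∀ n ≥ N, x n - l ∈ (π ^ m • Y : Submodule V X))
    -- (ii)
    ∧ (BornSeparated π 𝓑 ↔
        ∀ Y : Submodule V X, 𝓑.IsBounded (Y : Set X) → IsHausdorff (Ideal.span {π}) Y)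
    ∧ (BornSeparated π 𝓑 ↔
        ∀ S : Set X, 𝓑.IsBounded S → ∃ Y : Submodule V X,
          𝓑.IsBounded (Y : Set X) ∧ S ⊆ (Y : Set X) ∧ IsHausdorff (Ideal.span {π}) Y)
    -- (iii)
    ∧ (BornComplete π 𝓑 ↔
        ∀ S : Set X, 𝓑.IsBounded S → ∃ Y : Submodule V X,
          𝓑.IsBounded (Y : Set X) ∧ S ⊆ (Y : Set X) ∧ IsAdicComplete (Ideal.span {π}) Y)) := by
  refine ⟨fun x => ?_, ⟨fun hs Y hY => isHausdorff_of_bornSeparated hs hY, fun h => ?_⟩,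
    ⟨fun hs S hS => ?_, bornSeparated_of_cofinal_isHausdorff⟩,
    ⟨fun hC S hS => exists_isAdicComplete_superset hC hS, bornComplete_of_cofinal_isAdicComplete⟩⟩
  · simpa only [PiAdicTendsto, eventually_atTop] using exists_convTo_iff (𝓑 := 𝓑) (π := π) x
  · exact bornSeparated_of_cofinal_isHausdorff fun S hS =>
      ⟨_, 𝓑.isBounded_span hS, Submodule.subset_span, h _ (𝓑.isBounded_span hS)⟩
  · exact ⟨_, 𝓑.isBounded_span hS, Submodule.subset_span,
      isHausdorff_of_bornSeparated hs (𝓑.isBounded_span hS)⟩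

/-- Let `V` be a complete discrete valuation ring with uniformizer `π` and
let `X` be a bornological `V`-module with bornology `𝓑`.  Then:
(i) a sequence in `X` converges if and only if it is contained in a bounded `V`-submodule
`Y ⊆ X` and converges in `Y` with respect to the `π`-adic topology;
(ii) `X` is separated iff every bounded `V`-submodule of `X` is `π`-adically separated, iff
the bounded `π`-adically separated `V`-submodules are cofinal among bounded sets;
(iii) `X` is complete iff the bounded `π`-adically complete `V`-submodules are cofinal. -/
theorem separated_complete_characterisation
    {V : Type u} [CommRing V] [IsDomain V] [IsDiscreteValuationRing V]
    (π : V) (hπ : Irreducible π) (hV : IsAdicComplete (Ideal.span {π}) V)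
    {X : Type v} [AddCommGroup X] [Module V X] (𝓑 : ModBornology V X) :
    -- (i)
    ((∀ x : ℕ → X,
        (∃ l : X, ConvTo π 𝓑 x l) ↔
          ∃ Y : Submodule V X, 𝓑.IsBounded (Y : Set X) ∧ (∀ n, x n ∈ Y) ∧
            ∃ l ∈ Y, ∀ m : ℕ, ∃ N : ℕ, ∀ n ≥ N, x n - l ∈ (π ^ m • Y : Submodule V X))
    -- (ii)
    ∧ (BornSeparated π 𝓑 ↔
        ∀ Y : Submodule V X, 𝓑.IsBounded (Y : Set X) → IsHausdorff (Ideal.span {π}) Y)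
    ∧ (BornSeparated π 𝓑 ↔
        ∀ S : Set X, 𝓑.IsBounded S → ∃ Y : Submodule V X,
          𝓑.IsBounded (Y : Set X) ∧ S ⊆ (Y : Set X) ∧ IsHausdorff (Ideal.span {π}) Y)
    -- (iii)
    ∧ (BornComplete π 𝓑 ↔
        ∀ S : Set X, 𝓑.IsBounded S → ∃ Y : Submodule V X,
          𝓑.IsBounded (Y : Set X) ∧ S ⊆ (Y : Set X) ∧ IsAdicComplete (Ideal.span {π}) Y)) :=
  separated_complete_characterisation_general π 𝓑
end

section
/- Let R be a bornological K-algebra, M ⊆ R a bounded V-submodule, j ∈ ℤ and c ∈ ℤ with c ≥ 1. Then ρ(π^j M^c) = ε^j · ρ(M)^c, where ρ denotes the spectral radius. -/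
open Pointwise

universe u v w

namespace Born

section SpectralRadius

variable {V : Type u} [CommRing V]

/-- `⌈log_ε r⌉`, the exponent appearing in the operation `r ⋆ M = π ^ ⌈log_ε r⌉ • M`. -/
noncomputable def cexp (ε r : ℝ) : ℤ := ⌈Real.log r / Real.log ε⌉

section Valg

variable {A : Type v} [Ring A] [Algebra V A]

/-- An algebra bornology: a module bornology for which multiplication is bounded. -/
def IsAlgBorn (𝓑 : ModBornology V A) : Prop :=
  ∀ ⦃s t : Set A⦄, 𝓑.IsBounded s → 𝓑.IsBounded t → 𝓑.IsBounded (s * t)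

/-- `r ⋆ M = π ^ ⌈log_ε r⌉ • M` for `r ≤ 1` in a `V`-algebra (nonnegative exponent). -/
noncomputable def starV (π : V) (ε r : ℝ) (M : Submodule V A) : Submodule V A :=
  π ^ ((cexp ε r).toNat) • M

/-- The submodule of finite sums `Σ_{n ≥ 0} r^{-n} ⋆ M ^ n`. -/
noncomputable def geomSumV (π : V) (ε r : ℝ) (M : Submodule V A) : Submodule V A :=
  ⨆ n : ℕ, starV π ε (r ^ (-(n : ℤ))) (M ^ n)

/-- `ρ(M) ≤ 1` in a bornological `V`-algebra: the submodule `Σ_{n} r^{-n} ⋆ M^n` is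
bounded for every `r > 1`. -/
noncomputable def SpecLeOne (π : V) (ε : ℝ) (𝓑 : ModBornology V A) (M : Submodule V A) : Prop :=
  ∀ r : ℝ, 1 < r → 𝓑.IsBounded (geomSumV π ε r M : Set A)

end Valg

section Kalg

variable (K : Type u) [Field K] [Algebra V K]
variable {A : Type v} [Ring A] [Algebra K A] [Algebra V A] [IsScalarTower V K A]

/-- Scalar multiplication by `c : K` as a `V`-linear map on a `K`-algebra. -/
noncomputable def kSmul (c : K) : A →ₗ[V] A :=
  LinearMap.restrictScalars V (LinearMap.lsmul K A c)

/-- `r ⋆ M = π ^ ⌈log_ε r⌉ • M` in a `K`-algebra (integer exponent). -/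
noncomputable def starK (π : V) (ε r : ℝ) (M : Submodule V A) : Submodule V A :=
  M.map (kSmul K ((algebraMap V K π) ^ (cexp ε r)))

/-- The submodule of finite sums `Σ_{n ≥ 0} r^{-n} ⋆ M ^ n` in a `K`-algebra. -/
noncomputable def geomSumK (π : V) (ε r : ℝ) (M : Submodule V A) : Submodule V A :=
  ⨆ n : ℕ, starK K π ε (r ^ (-(n : ℤ))) (M ^ n)

/-- The spectral radius of a bounded `V`-submodule `M` of a bornological `K`-algebra:
the infimum (in `ℝ≥0∞`) of all `r > 0` such that `Σ_n r^{-n} ⋆ M^n` is bounded. -/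
noncomputable def specRad (π : V) (ε : ℝ) (𝓑 : ModBornology V A) (M : Submodule V A) : ENNReal :=
  sInf {ρ : ENNReal | ∃ r : ℝ, 0 < r ∧ ρ = ENNReal.ofReal r ∧
    𝓑.IsBounded (geomSumK K π ε r M : Set A)}

/-- A bornological `K`-algebra structure: multiplication is bounded and multiplication
by `π⁻¹` (the inverse of multiplication by `π`) is bounded. -/
def IsKAlgBorn (π : V) (𝓑 : ModBornology V A) : Prop :=
  IsAlgBorn 𝓑 ∧ ∀ ⦃s : Set A⦄, 𝓑.IsBounded s → 𝓑.IsBounded (kSmul (V := V) K ((algebraMap V K π)⁻¹) '' s)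

end Kalg

end SpectralRadius

end Born

open Born

/-!
Write `ϖ` for the image of `π` in `K` and `N = ϖ^j M^c`. For `r = ε^j s^c` the `n`-th summand
`r^{-n} ⋆ N^n` of the series defining `ρ(N)` is exactly the `(cn)`-th summand `s^{-cn} ⋆ M^{cn}`
of the series defining `ρ(M)`, because `⌈log_ε r^{-n}⌉ + jn = ⌈log_ε s^{-cn}⌉`. So the series
for `N` at `r` is the subseries of the series for `M` at `s` along multiples of `c`. Conversely,
every summand with index `m = cq + t`, `t < c`, lies in `ϖ^{-C}` times the `(cq)`-th summand
multiplied by the bounded submodule `(M + 1)^{c-1}`, where `C = ⌈c |log_ε s|⌉` does not depend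
on `m`. Hence the two series are bounded for the same `s`, and `ρ(N)` is the image of `ρ(M)`
under the order isomorphism `x ↦ ε^j x^c` of `[0, ∞]`.
-/

lemma ENNReal.sInf_image_mul_pow {e : ENNReal} (he0 : e ≠ 0) (heT : e ≠ ⊤) {c : ℕ}
    (hc : c ≠ 0) (S : Set ENNReal) :
    sInf ((fun x => e * x ^ c) '' S) = e * sInf S ^ c := by
  let Φ := (ENNReal.orderIsoRpow c (by positivity)).trans
    (ENNReal.mulLeftOrderIso e (ENNReal.isUnit_iff.2 ⟨he0, heT⟩))
  have hΦ : ⇑Φ = fun x => e * x ^ c := funext fun x => by simp [Φ, ENNReal.rpow_natCast]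
  rw [← hΦ, sInf_image, ← Φ.map_sInf, hΦ]

namespace ModBornology

variable {V : Type u} [CommRing V] {A : Type v} [Ring A] [Algebra V A] (𝓑 : ModBornology V A)

lemma isBounded_sup {P Q : Submodule V A} (hP : 𝓑.IsBounded (P : Set A))
    (hQ : 𝓑.IsBounded (Q : Set A)) : 𝓑.IsBounded ((P ⊔ Q : Submodule V A) : Set A) := by
  rw [← Submodule.span_eq P, ← Submodule.span_eq Q, ← Submodule.span_union]
  exact 𝓑.isBounded_span (𝓑.isBounded_union hP hQ)

lemma isBounded_one : 𝓑.IsBounded ((1 : Submodule V A) : Set A) := by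
  rw [Submodule.one_eq_span]
  exact 𝓑.isBounded_span (𝓑.isBounded_of_finite (Set.finite_singleton 1))

variable {𝓑}

lemma isBounded_mul (h𝓑 : IsAlgBorn 𝓑) {P Q : Submodule V A} (hP : 𝓑.IsBounded (P : Set A))
    (hQ : 𝓑.IsBounded (Q : Set A)) : 𝓑.IsBounded ((P * Q : Submodule V A) : Set A) := by
  rw [Submodule.mul_eq_span_mul_set]
  exact 𝓑.isBounded_span (h𝓑 hP hQ)

lemma isBounded_pow (h𝓑 : IsAlgBorn 𝓑) {P : Submodule V A} (hP : 𝓑.IsBounded (P : Set A))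
    (n : ℕ) : 𝓑.IsBounded ((P ^ n : Submodule V A) : Set A) := by
  induction n with
  | zero => rw [pow_zero]; exact 𝓑.isBounded_one
  | succ n ih => rw [pow_succ]; exact isBounded_mul h𝓑 ih hP

end ModBornology

namespace Born

section KSmul

variable {V : Type u} [CommRing V] {K : Type u} [Field K] [Algebra V K]
  {A : Type v} [Ring A] [Algebra K A] [Algebra V A] [IsScalarTower V K A]

lemma kSmul_one : (kSmul (V := V) K (1 : K) : A →ₗ[V] A) = LinearMap.id :=
  LinearMap.ext (one_smul K)

lemma kSmul_mul (a b : K) :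
    (kSmul (V := V) K (a * b) : A →ₗ[V] A) = (kSmul K a).comp (kSmul K b) :=
  LinearMap.ext (mul_smul a b)

lemma map_kSmul_map_kSmul (a b : K) (P : Submodule V A) :
    (P.map (kSmul K b)).map (kSmul K a) = P.map (kSmul (V := V) K (a * b)) := by
  rw [kSmul_mul, Submodule.map_comp]

lemma map_kSmul_mul_map_kSmul (a b : K) (P Q : Submodule V A) :
    P.map (kSmul K a) * Q.map (kSmul K b) = (P * Q).map (kSmul (V := V) K (a * b)) := by
  apply le_antisymm
  · rw [Submodule.mul_le]
    rintro _ ⟨p, hp, rfl⟩ _ ⟨q, hq, rfl⟩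
    exact ⟨p * q, Submodule.mul_mem_mul hp hq, (smul_mul_smul_comm a p b q).symm⟩
  · rw [Submodule.map_le_iff_le_comap, Submodule.mul_le]
    intro p hp q hq
    change (a * b) • (p * q) ∈ P.map (kSmul K a) * Q.map (kSmul K b)
    rw [← smul_mul_smul_comm]
    exact Submodule.mul_mem_mul (Submodule.mem_map_of_mem hp) (Submodule.mem_map_of_mem hq)

lemma map_kSmul_pow (a : K) (P : Submodule V A) (n : ℕ) :
    P.map (kSmul K a) ^ n = (P ^ n).map (kSmul (V := V) K (a ^ n)) := by
  induction n with
  | zero => simp [kSmul_one]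
  | succ n ih => rw [pow_succ, ih, map_kSmul_mul_map_kSmul, ← pow_succ, ← pow_succ]

lemma map_kSmul_algebraMap_le (v : V) (P : Submodule V A) :
    P.map (kSmul K (algebraMap V K v)) ≤ P := by
  rintro _ ⟨x, hx, rfl⟩
  change algebraMap V K v • x ∈ P
  rw [algebraMap_smul]
  exact P.smul_mem v hx

variable {π : V} (hπ : algebraMap V K π ≠ 0)
include hπ

lemma map_kSmul_zpow_le_of_le (P : Submodule V A) {a b : ℤ} (hab : a ≤ b) :
    P.map (kSmul K (algebraMap V K π ^ b)) ≤ P.map (kSmul (V := V) K (algebraMap V K π ^ a)) := by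
  obtain ⟨d, rfl⟩ : ∃ d : ℕ, b = a + d := ⟨(b - a).toNat, by omega⟩
  rw [zpow_add₀ hπ, zpow_natCast, ← map_pow, ← map_kSmul_map_kSmul]
  exact Submodule.map_mono (map_kSmul_algebraMap_le _ P)

end KSmul

section Bounded

variable {V : Type u} [CommRing V] {K : Type u} [Field K] [Algebra V K]
  {A : Type v} [Ring A] [Algebra K A] [Algebra V A] [IsScalarTower V K A]
  {π : V} {𝓑 : ModBornology V A}

lemma isBounded_map_kSmul_inv_pow (h𝓑 : IsKAlgBorn K π 𝓑) {P : Submodule V A}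
    (hP : 𝓑.IsBounded (P : Set A)) (n : ℕ) :
    𝓑.IsBounded (P.map (kSmul (V := V) K ((algebraMap V K π)⁻¹ ^ n)) : Set A) := by
  induction n with
  | zero => simpa [kSmul_one] using hP
  | succ n ih =>
    rw [pow_succ', ← map_kSmul_map_kSmul, Submodule.map_coe]
    exact h𝓑.2 ih

lemma isBounded_map_kSmul_zpow (hπ : algebraMap V K π ≠ 0) (h𝓑 : IsKAlgBorn K π 𝓑)
    {P : Submodule V A} (hP : 𝓑.IsBounded (P : Set A)) (z : ℤ) :
    𝓑.IsBounded (P.map (kSmul (V := V) K (algebraMap V K π ^ z)) : Set A) := by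
  have hle := map_kSmul_zpow_le_of_le hπ P (Int.neg_le_of_neg_le (Int.self_le_toNat (-z)))
  rw [zpow_neg, zpow_natCast, ← inv_pow] at hle
  exact 𝓑.isBounded_subset (isBounded_map_kSmul_inv_pow h𝓑 hP _) hle

end Bounded

lemma cexp_zpow (ε s : ℝ) (m : ℤ) : cexp ε (s ^ m) = ⌈m * (Real.log s / Real.log ε)⌉ := by
  rw [cexp, Real.log_zpow, mul_div_assoc]

lemma cexp_zpow_add_le (ε s : ℝ) (n : ℤ) {t c : ℕ} (htc : t ≤ c) :
    cexp ε (s ^ (n + t)) ≤ cexp ε (s ^ n) + ⌈c * |Real.log s / Real.log ε|⌉ := by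
  rw [cexp_zpow, cexp_zpow, Int.cast_add, add_mul]
  refine (Int.ceil_add_le _ _).trans (add_le_add_right (Int.ceil_mono ?_) _)
  push_cast
  calc (t : ℝ) * (Real.log s / Real.log ε) ≤ t * |Real.log s / Real.log ε| :=
        mul_le_mul_of_nonneg_left (le_abs_self _) t.cast_nonneg
    _ ≤ c * |Real.log s / Real.log ε| :=
        mul_le_mul_of_nonneg_right (by exact_mod_cast htc) (abs_nonneg _)

lemma cexp_zpow_mul_pow_zpow {ε s : ℝ} (hε : Real.log ε ≠ 0) (hs : s ≠ 0) (j : ℤ) (c : ℕ)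
    (m : ℤ) : cexp ε ((ε ^ j * s ^ c) ^ m) = cexp ε (s ^ (c * m)) + j * m := by
  have hε0 : ε ≠ 0 := by rintro rfl; exact hε Real.log_zero
  rw [cexp_zpow, cexp_zpow, Real.log_mul (zpow_ne_zero _ hε0) (pow_ne_zero _ hs),
    Real.log_zpow, Real.log_pow, ← Int.ceil_add_intCast]
  congr 1
  push_cast
  field_simp
  ring

section GeomSum

variable {V : Type u} [CommRing V] {K : Type u} [Field K] [Algebra V K]
  {A : Type v} [Ring A] [Algebra K A] [Algebra V A] [IsScalarTower V K A]
  {π : V} (hπ : algebraMap V K π ≠ 0) {ε s : ℝ} (M : Submodule V A) {c : ℕ}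
include hπ

lemma starK_map_zpow_pow (hε : Real.log ε ≠ 0) (hs : s ≠ 0) (j : ℤ) (n : ℕ) :
    starK K π ε ((ε ^ j * s ^ c) ^ (-(n : ℤ)))
        ((M ^ c).map (kSmul (V := V) K (algebraMap V K π ^ j)) ^ n)
      = starK K π ε (s ^ (-((c * n : ℕ) : ℤ))) (M ^ (c * n)) := by
  have hexp : cexp ε ((ε ^ j * s ^ c) ^ (-(n : ℤ))) + j * n
      = cexp ε (s ^ (-((c * n : ℕ) : ℤ))) := by
    rw [cexp_zpow_mul_pow_zpow hε hs, Nat.cast_mul, mul_neg]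
    ring
  rw [starK, starK, map_kSmul_pow, map_kSmul_map_kSmul, ← pow_mul, ← hexp, zpow_add₀ hπ,
    zpow_mul, zpow_natCast]

lemma geomSumK_map_zpow_pow (hε : Real.log ε ≠ 0) (hs : s ≠ 0) (j : ℤ) :
    geomSumK K π ε (ε ^ j * s ^ c) ((M ^ c).map (kSmul (V := V) K (algebraMap V K π ^ j)))
      = ⨆ q : ℕ, starK K π ε (s ^ (-((c * q : ℕ) : ℤ))) (M ^ (c * q)) :=
  iSup_congr (starK_map_zpow_pow hπ M hε hs j)

lemma geomSumK_le_map_iSup_mul (hc : 0 < c) :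
    geomSumK K π ε s M
      ≤ ((⨆ q : ℕ, starK K π ε (s ^ (-((c * q : ℕ) : ℤ))) (M ^ (c * q))) * (M ⊔ 1) ^ (c - 1)).map
          (kSmul (V := V) K (algebraMap V K π ^ (-⌈c * |Real.log s / Real.log ε|⌉))) := by
  set C := ⌈c * |Real.log s / Real.log ε|⌉
  refine iSup_le fun m => ?_
  obtain ⟨q, t, ht, rfl⟩ : ∃ q t : ℕ, t < c ∧ c * q + t = m :=
    ⟨m / c, m % c, Nat.mod_lt m hc, Nat.div_add_mod m c⟩
  have hexp : cexp ε (s ^ (-((c * q : ℕ) : ℤ))) ≤ cexp ε (s ^ (-((c * q + t : ℕ) : ℤ))) + C := by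
    have hsum : -((c * q + t : ℕ) : ℤ) + t = -((c * q : ℕ) : ℤ) := by push_cast; ring
    simpa only [hsum] using cexp_zpow_add_le ε s (-((c * q + t : ℕ) : ℤ)) ht.le
  have hMt : M ^ t ≤ (M ⊔ 1) ^ (c - 1) :=
    (pow_le_pow_left₀ bot_le le_sup_left t).trans (pow_le_pow_right₀ le_sup_right (by omega))
  calc starK K π ε (s ^ (-((c * q + t : ℕ) : ℤ))) (M ^ (c * q + t))
      ≤ (M ^ (c * q + t)).map (kSmul (V := V) K
          (algebraMap V K π ^ (-C + cexp ε (s ^ (-((c * q : ℕ) : ℤ)))))) :=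
        map_kSmul_zpow_le_of_le hπ _ (by omega)
    _ = (starK K π ε (s ^ (-((c * q : ℕ) : ℤ))) (M ^ (c * q)) * M ^ t).map
          (kSmul (V := V) K (algebraMap V K π ^ (-C))) := by
        rw [starK, ← Submodule.map_id (M ^ t), ← kSmul_one (K := K), map_kSmul_mul_map_kSmul,
          map_kSmul_map_kSmul, mul_one, ← zpow_add₀ hπ, pow_add]
    _ ≤ _ := Submodule.map_mono (mul_le_mul' (le_iSup_of_le q le_rfl) hMt)

lemma isBounded_geomSumK_map_zpow_pow_iff {𝓑 : ModBornology V A} (h𝓑 : IsKAlgBorn K π 𝓑)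
    (hM : 𝓑.IsBounded (M : Set A)) (hc : 0 < c) (hε : Real.log ε ≠ 0) (hs : s ≠ 0) (j : ℤ) :
    𝓑.IsBounded (geomSumK K π ε (ε ^ j * s ^ c)
        ((M ^ c).map (kSmul (V := V) K (algebraMap V K π ^ j))) : Set A)
      ↔ 𝓑.IsBounded (geomSumK K π ε s M : Set A) := by
  rw [geomSumK_map_zpow_pow hπ M hε hs]
  constructor
  · intro hsub
    have hT := ModBornology.isBounded_pow h𝓑.1 (𝓑.isBounded_sup hM 𝓑.isBounded_one) (c - 1)
    exact 𝓑.isBounded_subset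
      (isBounded_map_kSmul_zpow hπ h𝓑 (ModBornology.isBounded_mul h𝓑.1 hsub hT) _)
      (geomSumK_le_map_iSup_mul hπ M hc)
  · refine fun hM' => 𝓑.isBounded_subset hM' (SetLike.coe_mono (iSup_le fun q => ?_))
    exact le_iSup (fun m : ℕ => starK K π ε (s ^ (-(m : ℤ))) (M ^ m)) (c * q)

end GeomSum

section SpecRad

variable {V : Type u} [CommRing V] (K : Type u) [Field K] [Algebra V K]
  {A : Type v} [Ring A] [Algebra K A] [Algebra V A] [IsScalarTower V K A]

lemma specRad_eq_ofReal_mul_pow (π : V) (ε : ℝ) (𝓑 : ModBornology V A) {N M : Submodule V A}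
    {a : ℝ} (ha : 0 < a) {c : ℕ} (hc : c ≠ 0)
    (hNM : ∀ s : ℝ, 0 < s → (𝓑.IsBounded (geomSumK K π ε (a * s ^ c) N : Set A)
      ↔ 𝓑.IsBounded (geomSumK K π ε s M : Set A))) :
    specRad K π ε 𝓑 N = ENNReal.ofReal a * specRad K π ε 𝓑 M ^ c := by
  have hofReal : ∀ s : ℝ, 0 < s →
      ENNReal.ofReal a * ENNReal.ofReal s ^ c = ENNReal.ofReal (a * s ^ c) := fun s hs => by
    rw [← ENNReal.ofReal_pow hs.le, ← ENNReal.ofReal_mul ha.le]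
  rw [specRad, specRad, ← ENNReal.sInf_image_mul_pow (ENNReal.ofReal_pos.2 ha).ne'
    ENNReal.ofReal_ne_top hc]
  congr 1
  ext ρ
  constructor
  · rintro ⟨r, hr, rfl, hbdd⟩
    set s := (r / a) ^ (c⁻¹ : ℝ)
    have hs : 0 < s := Real.rpow_pos_of_pos (div_pos hr ha) _
    have hr' : a * s ^ c = r := by
      rw [Real.rpow_inv_natCast_pow (div_pos hr ha).le hc, mul_div_cancel₀ r ha.ne']
    refine ⟨ENNReal.ofReal s, ⟨s, hs, rfl, (hNM s hs).1 (hr' ▸ hbdd)⟩, ?_⟩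
    exact (hofReal s hs).trans (congrArg _ hr')
  · rintro ⟨_, ⟨s, hs, rfl, hbdd⟩, rfl⟩
    exact ⟨a * s ^ c, by positivity, hofReal s hs, (hNM s hs).2 hbdd⟩

end SpecRad

end Born

theorem specRad_zpow_smul_pow_general
    {V : Type u} [CommRing V]
    (π : V) (hπ : Irreducible π)
    (K : Type u) [Field K] [Algebra V K] [IsFractionRing V K]
    (ε : ℝ) (hε0 : 0 < ε) (hε1 : ε < 1)
    {R : Type v} [Ring R] [Algebra K R] [Algebra V R] [IsScalarTower V K R]
    (𝓑 : ModBornology V R) (h𝓑 : IsKAlgBorn K π 𝓑)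
    (M : Submodule V R) (hM : 𝓑.IsBounded (M : Set R))
    (j : ℤ) (c : ℕ) (hc : 1 ≤ c) :
    specRad K π ε 𝓑 ((M ^ c).map (kSmul (V := V) K ((algebraMap V K π) ^ j)))
      = ENNReal.ofReal (ε ^ j) * (specRad K π ε 𝓑 M) ^ c := by
  have hπ0 : algebraMap V K π ≠ 0 := IsFractionRing.to_map_eq_zero_iff.not.2 hπ.ne_zero
  have hε : Real.log ε ≠ 0 := (Real.log_neg hε0 hε1).ne
  exact specRad_eq_ofReal_mul_pow K π ε 𝓑 (zpow_pos hε0 j) (by omega) fun s hs =>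
    isBounded_geomSumK_map_zpow_pow_iff hπ0 M h𝓑 hM hc hε hs.ne' j

/-- **Statement 4.** Let `R` be a bornological `K`-algebra, `M ⊆ R` a bounded `V`-submodule,
`j ∈ ℤ` and `c ∈ ℤ`, `c ≥ 1`.  Then `ρ(π^j M^c) = ε^j · ρ(M)^c`. -/
theorem specRad_zpow_smul_pow
    {V : Type u} [CommRing V] [IsDomain V] [IsDiscreteValuationRing V]
    (π : V) (hπ : Irreducible π) (hV : IsAdicComplete (Ideal.span {π}) V)
    (K : Type u) [Field K] [Algebra V K] [IsFractionRing V K]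
    (ε : ℝ) (hε0 : 0 < ε) (hε1 : ε < 1)
    {R : Type v} [Ring R] [Algebra K R] [Algebra V R] [IsScalarTower V K R]
    (𝓑 : ModBornology V R) (h𝓑 : IsKAlgBorn K π 𝓑)
    (M : Submodule V R) (hM : 𝓑.IsBounded (M : Set R))
    (j : ℤ) (c : ℕ) (hc : 1 ≤ c) :
    specRad K π ε 𝓑 ((M ^ c).map (kSmul (V := V) K ((algebraMap V K π) ^ j)))
      = ENNReal.ofReal (ε ^ j) * (specRad K π ε 𝓑 M) ^ c :=
  specRad_zpow_smul_pow_general π hπ K ε hε0 hε1 𝓑 h𝓑 M hM j c hc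
end

section
/- Let (R, 𝓑) be a bornological V-algebra. The following are equivalent: (1) ρ(M) ≤ 1 for every bounded V-submodule M ∈ 𝓑; (2) Σ_{j≥0} π^j M^{cj+d} is bounded for every bounded V-submodule M ∈ 𝓑 and all c, d ∈ ℕ; (3) Σ_{j≥0} π^j M^{j+1} is bounded for every bounded V-submodule M ∈ 𝓑; (4) every bounded subset of R is contained in a bounded V-submodule M with π·M² ⊆ M. -/
open Pointwise

universe u v w

open Born

/-! With `s = -log_ε r > 0`, the exponent of `π` in `r⁻ⁿ ⋆ Mⁿ` is `⌈n s⌉`, so `ρ(M) ≤ 1` says that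
`Σₙ π^⌈n s⌉ Mⁿ` is bounded for every `s > 0`. Taking `s = 1/(c+1)` dominates `Σⱼ πʲ M^(cj)`, and
multiplying by `M^d` gives (2). Conversely, `Σⱼ πʲ M^(j+1)` is a submodule `N ⊇ M` with `π N² ⊆ N`.
If `N ⊇ 1 + M + ⋯ + M^m` and `π N² ⊆ N`, then `π^q N^(q+1) ⊆ N` for all `q`, hence
`π^⌈n s⌉ Mⁿ ⊆ π^⌊n/m⌋ N^(⌊n/m⌋+1) ⊆ N` as soon as `m s ≥ 1`. -/


namespace ModBornology

variable {V : Type u} [CommRing V] {X : Type v} [AddCommGroup X] [Module V X]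
  (𝓑 : ModBornology V X)

theorem isBounded_sup_s2 {M N : Submodule V X} (hM : 𝓑.IsBounded (M : Set X))
    (hN : 𝓑.IsBounded (N : Set X)) : 𝓑.IsBounded ((M ⊔ N : Submodule V X) : Set X) := by
  rw [← Submodule.span_eq M, ← Submodule.span_eq N, ← Submodule.span_union]
  exact 𝓑.isBounded_span (𝓑.isBounded_union hM hN)

theorem isBounded_finset_sup {ι : Type*} (s : Finset ι) {f : ι → Submodule V X}
    (hf : ∀ i ∈ s, 𝓑.IsBounded (f i : Set X)) : 𝓑.IsBounded ((s.sup f : Submodule V X) : Set X) :=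
  Finset.sup_induction (p := fun M : Submodule V X => 𝓑.IsBounded (M : Set X))
    (by simpa using 𝓑.isBounded_of_finite (Set.finite_singleton 0))
    (fun _ hM _ hN => 𝓑.isBounded_sup_s2 hM hN) hf

end ModBornology

namespace Born

section AlgBornology

variable {V : Type u} [CommRing V] {R : Type v} [Ring R] [Algebra V R] {𝓑 : ModBornology V R}

theorem IsAlgBorn.isBounded_mul (h𝓑 : IsAlgBorn 𝓑) {M N : Submodule V R}
    (hM : 𝓑.IsBounded (M : Set R)) (hN : 𝓑.IsBounded (N : Set R)) :
    𝓑.IsBounded ((M * N : Submodule V R) : Set R) := by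
  rw [Submodule.mul_eq_span_mul_set]
  exact 𝓑.isBounded_span (h𝓑 hM hN)

theorem IsAlgBorn.isBounded_pow (h𝓑 : IsAlgBorn 𝓑) {M : Submodule V R}
    (hM : 𝓑.IsBounded (M : Set R)) (n : ℕ) : 𝓑.IsBounded ((M ^ n : Submodule V R) : Set R) := by
  induction n with
  | zero =>
    rw [pow_zero, Submodule.one_eq_span]
    exact 𝓑.isBounded_span (𝓑.isBounded_of_finite (Set.finite_singleton 1))
  | succ n ih => rw [pow_succ]; exact h𝓑.isBounded_mul ih hM

end AlgBornology

section Powers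

variable {V : Type u} [CommRing V] {R : Type v} [Ring R] [Algebra V R]

theorem pow_smul_le_pow_smul_s2 (a : V) {q k : ℕ} (h : q ≤ k) (P : Submodule V R) :
    a ^ k • P ≤ a ^ q • P := by
  rw [← Nat.add_sub_cancel' h, pow_add, mul_smul]
  exact smul_mono_right _ (Submodule.smul_le_self_of_tower _ _)

theorem pow_smul_pow_succ_le {π : V} {N : Submodule V R} (hN : π • (N * N) ≤ N) (q : ℕ) :
    π ^ q • N ^ (q + 1) ≤ N := by
  induction q with
  | zero => simp
  | succ q ih =>
    calc π ^ (q + 1) • N ^ (q + 1 + 1) = π • ((π ^ q • N ^ (q + 1)) * N) := by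
          rw [smul_mul_assoc, ← pow_succ, ← mul_smul, ← pow_succ']
      _ ≤ π • (N * N) := smul_mono_right _ (mul_le_mul_left ih N)
      _ ≤ N := hN

theorem pow_le_pow_div_add_one {M N : Submodule V R} {m : ℕ} (hm : 0 < m)
    (hMN : ∀ i ≤ m, M ^ i ≤ N) (n : ℕ) : M ^ n ≤ N ^ (n / m + 1) :=
  calc M ^ n = (M ^ m) ^ (n / m) * M ^ (n % m) := by
        rw [← pow_mul, ← pow_add, Nat.div_add_mod]
    _ ≤ N ^ (n / m) * N :=
        mul_le_mul' (pow_le_pow_left' (hMN m le_rfl) _) (hMN _ (Nat.mod_lt n hm).le)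
    _ = N ^ (n / m + 1) := (pow_succ N _).symm

def dampedPowers (π : V) (M : Submodule V R) : Submodule V R :=
  ⨆ j : ℕ, π ^ j • M ^ (j + 1)

theorem le_dampedPowers (π : V) (M : Submodule V R) : M ≤ dampedPowers π M := by
  simpa [dampedPowers] using le_iSup (fun j : ℕ => π ^ j • M ^ (j + 1)) 0

theorem smul_mul_dampedPowers_le (π : V) (M : Submodule V R) :
    π • (dampedPowers π M * dampedPowers π M) ≤ dampedPowers π M := by
  rw [dampedPowers, Submodule.iSup_mul, Submodule.smul_iSup']
  refine iSup_le fun i => ?_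
  rw [Submodule.mul_iSup, Submodule.smul_iSup']
  refine iSup_le fun j => le_iSup_of_le (i + j + 1) (le_of_eq ?_)
  rw [smul_mul_assoc, mul_smul_comm, ← mul_smul, ← mul_smul, ← pow_add, ← pow_succ', ← pow_add]
  ring_nf

end Powers

section SpectralRadius

variable {V : Type u} [CommRing V] {R : Type v} [Ring R] [Algebra V R]

theorem starV_zpow_neg (π : V) (ε r : ℝ) (n : ℕ) (P : Submodule V R) :
    starV π ε (r ^ (-(n : ℤ))) P = π ^ ⌈n * -Real.logb ε r⌉₊ • P := by
  rw [starV, cexp, Int.ceil_toNat, Real.log_zpow, Real.logb]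
  congr 3
  push_cast
  ring

theorem geomSumV_le_iff {π : V} {ε r : ℝ} {M N : Submodule V R} :
    geomSumV π ε r M ≤ N ↔ ∀ n : ℕ, π ^ ⌈n * -Real.logb ε r⌉₊ • M ^ n ≤ N := by
  simp only [geomSumV, iSup_le_iff, starV_zpow_neg]

theorem iSup_pow_smul_pow_mul_le_geomSumV (π : V) {ε : ℝ} (hε0 : 0 < ε) (hε1 : ε ≠ 1)
    (M : Submodule V R) (c : ℕ) :
    ⨆ j : ℕ, π ^ j • M ^ (c * j) ≤ geomSumV π ε (ε ^ (-((c : ℝ) + 1)⁻¹)) M := by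
  refine iSup_le fun j => ?_
  have hj : ⌈((c * j : ℕ) : ℝ) * -Real.logb ε (ε ^ (-((c : ℝ) + 1)⁻¹))⌉₊ ≤ j := by
    rw [Real.logb_rpow hε0 hε1, neg_neg, Nat.ceil_le, ← div_eq_mul_inv,
      div_le_iff₀ (by positivity)]
    push_cast
    nlinarith [(j.cast_nonneg : (0 : ℝ) ≤ j)]
  calc π ^ j • M ^ (c * j)
      ≤ starV π ε ((ε ^ (-((c : ℝ) + 1)⁻¹)) ^ (-((c * j : ℕ) : ℤ))) (M ^ (c * j)) := by
        rw [starV_zpow_neg]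
        exact pow_smul_le_pow_smul_s2 π hj _
    _ ≤ geomSumV π ε (ε ^ (-((c : ℝ) + 1)⁻¹)) M :=
        le_iSup (fun n : ℕ => starV π ε (_ ^ (-(n : ℤ))) (M ^ n)) (c * j)

theorem geomSumV_le_of_smul_mul_le {π : V} {ε r : ℝ} {M N : Submodule V R} {m : ℕ}
    (hm : 0 < m) (hmr : 1 ≤ m * -Real.logb ε r) (hMN : ∀ i ≤ m, M ^ i ≤ N)
    (hN : π • (N * N) ≤ N) : geomSumV π ε r M ≤ N := by
  refine geomSumV_le_iff.2 fun n => ?_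
  have hq : n / m ≤ ⌈n * -Real.logb ε r⌉₊ := by
    have hdiv : ((n / m : ℕ) : ℝ) ≤ n * -Real.logb ε r :=
      calc ((n / m : ℕ) : ℝ) ≤ n / m := Nat.cast_div_le
        _ ≤ n * -Real.logb ε r := by
          rw [div_le_iff₀ (by positivity)]
          nlinarith [mul_le_mul_of_nonneg_left hmr (n.cast_nonneg : (0 : ℝ) ≤ n)]
    exact_mod_cast hdiv.trans (Nat.le_ceil _)
  calc π ^ ⌈n * -Real.logb ε r⌉₊ • M ^ n ≤ π ^ (n / m) • M ^ n := pow_smul_le_pow_smul_s2 π hq _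
    _ ≤ π ^ (n / m) • N ^ (n / m + 1) := smul_mono_right _ (pow_le_pow_div_add_one hm hMN n)
    _ ≤ N := pow_smul_pow_succ_le hN _

variable {𝓑 : ModBornology V R} {π : V} {ε : ℝ}

theorem IsAlgBorn.isBounded_iSup_pow_smul_pow (h𝓑 : IsAlgBorn 𝓑) (hε0 : 0 < ε) (hε1 : ε < 1)
    {M : Submodule V R} (hMb : 𝓑.IsBounded (M : Set R)) (hM : SpecLeOne π ε 𝓑 M) (c d : ℕ) :
    𝓑.IsBounded ((⨆ j : ℕ, π ^ j • M ^ (c * j + d) : Submodule V R) : Set R) := by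
  have hr : 1 < ε ^ (-((c : ℝ) + 1)⁻¹) :=
    Real.one_lt_rpow_of_pos_of_lt_one_of_neg hε0 hε1 (neg_neg_of_pos (by positivity))
  refine 𝓑.isBounded_subset (h𝓑.isBounded_mul (hM _ hr) (h𝓑.isBounded_pow hMb d))
    (SetLike.coe_subset_coe.2 (iSup_le fun j => ?_))
  calc π ^ j • M ^ (c * j + d) = (π ^ j • M ^ (c * j)) * M ^ d := by
        rw [pow_add, smul_mul_assoc]
    _ ≤ _ := mul_le_mul_left
        ((le_iSup (fun j : ℕ => π ^ j • M ^ (c * j)) j).trans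
          (iSup_pow_smul_pow_mul_le_geomSumV π hε0 hε1.ne M c)) _

theorem IsAlgBorn.specLeOne_of_forall_exists_smul_mul_le (h𝓑 : IsAlgBorn 𝓑) (hε0 : 0 < ε) (hε1 : ε < 1)
    (hclosed : ∀ S : Set R, 𝓑.IsBounded S → ∃ N : Submodule V R,
      𝓑.IsBounded (N : Set R) ∧ S ⊆ (N : Set R) ∧ π • (N * N) ≤ N)
    {M : Submodule V R} (hM : 𝓑.IsBounded (M : Set R)) : SpecLeOne π ε 𝓑 M := by
  intro r hr
  have hs : 0 < -Real.logb ε r := neg_pos.2 (Real.logb_neg_of_base_lt_one hε0 hε1 hr)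
  set m := ⌈(-Real.logb ε r)⁻¹⌉₊
  have hm : 0 < m := Nat.ceil_pos.2 (inv_pos.2 hs)
  have hms : 1 ≤ m * -Real.logb ε r :=
    calc 1 = (-Real.logb ε r)⁻¹ * -Real.logb ε r := (inv_mul_cancel₀ hs.ne').symm
      _ ≤ m * -Real.logb ε r := by gcongr; exact Nat.le_ceil _
  obtain ⟨N, hN, hMN, hNN⟩ := hclosed _
    (𝓑.isBounded_finset_sup (Finset.range (m + 1)) fun i _ => h𝓑.isBounded_pow hM i)
  refine 𝓑.isBounded_subset hN (geomSumV_le_of_smul_mul_le hm hms (fun i hi => ?_) hNN)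
  exact (Finset.le_sup (f := (M ^ ·)) (Finset.mem_range_succ_iff.2 hi)).trans
    (SetLike.coe_subset_coe.1 hMN)

end SpectralRadius

end Born

open Born Submodule

theorem specLeOne_tfae_general
    {V : Type u} [CommRing V]
    (π : V)
    (ε : ℝ) (hε0 : 0 < ε) (hε1 : ε < 1)
    {R : Type v} [Ring R] [Algebra V R]
    (𝓑 : ModBornology V R) (h𝓑 : IsAlgBorn 𝓑) :
    [ (∀ M : Submodule V R, 𝓑.IsBounded (M : Set R) → SpecLeOne π ε 𝓑 M),
      (∀ M : Submodule V R, 𝓑.IsBounded (M : Set R) → ∀ c d : ℕ,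
        𝓑.IsBounded ((⨆ j : ℕ, π ^ j • M ^ (c * j + d) : Submodule V R) : Set R)),
      (∀ M : Submodule V R, 𝓑.IsBounded (M : Set R) →
        𝓑.IsBounded ((⨆ j : ℕ, π ^ j • M ^ (j + 1) : Submodule V R) : Set R)),
      (∀ S : Set R, 𝓑.IsBounded S → ∃ M : Submodule V R,
        𝓑.IsBounded (M : Set R) ∧ S ⊆ (M : Set R) ∧ π • (M * M) ≤ M) ].TFAE := by
  tfae_have 1 → 2 := fun h1 M hM => h𝓑.isBounded_iSup_pow_smul_pow hε0 hε1 hM (h1 M hM)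
  tfae_have 2 → 3 := fun h2 M hM => by simpa using h2 M hM 1 1
  tfae_have 3 → 4 := fun h3 S hS =>
    ⟨dampedPowers π (span V S), h3 _ (𝓑.isBounded_span hS),
      subset_span.trans (le_dampedPowers π _), smul_mul_dampedPowers_le π _⟩
  tfae_have 4 → 1 := fun h4 M hM => h𝓑.specLeOne_of_forall_exists_smul_mul_le hε0 hε1 h4 hM
  tfae_finish

/-- For a bornological `V`-algebra `(R, 𝓑)` the following are equivalent:
(1) `ρ(M) ≤ 1` for all bounded `V`-submodules `M`;
(2) `Σ_{j≥0} π^j M^{cj+d}` is bounded for all bounded `V`-submodules `M` and all `c, d ∈ ℕ`;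
(3) `Σ_{j≥0} π^j M^{j+1}` is bounded for all bounded `V`-submodules `M`;
(4) every bounded subset of `R` is contained in a bounded `V`-submodule `M` with
`π·M² ⊆ M`. -/
theorem specLeOne_tfae
    {V : Type u} [CommRing V] [IsDomain V] [IsDiscreteValuationRing V]
    (π : V) (hπ : Irreducible π) (hV : IsAdicComplete (Ideal.span {π}) V)
    (ε : ℝ) (hε0 : 0 < ε) (hε1 : ε < 1)
    {R : Type v} [Ring R] [Algebra V R]
    (𝓑 : ModBornology V R) (h𝓑 : IsAlgBorn 𝓑) :
    [ (∀ M : Submodule V R, 𝓑.IsBounded (M : Set R) → SpecLeOne π ε 𝓑 M),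
      (∀ M : Submodule V R, 𝓑.IsBounded (M : Set R) → ∀ c d : ℕ,
        𝓑.IsBounded ((⨆ j : ℕ, π ^ j • M ^ (c * j + d) : Submodule V R) : Set R)),
      (∀ M : Submodule V R, 𝓑.IsBounded (M : Set R) →
        𝓑.IsBounded ((⨆ j : ℕ, π ^ j • M ^ (j + 1) : Submodule V R) : Set R)),
      (∀ S : Set R, 𝓑.IsBounded S → ∃ M : Submodule V R,
        𝓑.IsBounded (M : Set R) ∧ S ⊆ (M : Set R) ∧ π • (M * M) ≤ M) ].TFAE :=
  specLeOne_tfae_general π ε hε0 hε1 𝓑 h𝓑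
end

section
/- If R is a complete bornological V-algebra and M ⊆ R a bounded V-submodule with ρ(M) < ε^{−1}, then 1 − πz is invertible in R for every z ∈ M. If R is a complete bornological K-algebra and M ⊆ R a bounded V-submodule with ρ(M) < 1, then 1 − z is invertible in R for every z ∈ M. -/
open Pointwise

universe u v w

open Born

/-!
The inverse of `1 - w` is the Neumann series `Σ w^k`. The spectral radius bound provides the
bounded submodule `N = Σ_n r^{-n} ⋆ M^n` and `b > 0` with `w^k ∈ π^⌊k b⌋ • N` for all `k`
(`b = 1 - log_{ε⁻¹} r` for `w = πz`, `b = -log_{ε⁻¹} r` for `w = z`), so the partial sums are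
`N`-Cauchy and converge to some `L`. As `(1 - w) Σ_{i<n} w^i = 1 - w^n` also converges to `1`,
separatedness gives `(1 - w) L = 1`, and likewise `L (1 - w) = 1`.
-/

open Filter Finset

theorem Real.log_inv_pos {ε : ℝ} (hε0 : 0 < ε) (hε1 : ε < 1) : 0 < Real.log ε⁻¹ :=
  Real.log_pos ((one_lt_inv₀ hε0).mpr hε1)

theorem Submodule.pointwise_smul_le_of_dvd {V : Type u} [CommRing V] {X : Type v}
    [AddCommGroup X] [Module V X] {a b : V} (h : a ∣ b) (N : Submodule V X) : b • N ≤ a • N := by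
  rw [← Submodule.ideal_span_singleton_smul, ← Submodule.ideal_span_singleton_smul]
  exact Submodule.smul_mono_left (Ideal.span_singleton_le_span_singleton.mpr h)

theorem floor_mul_one_sub_add_ceil_mul_le (k : ℕ) {a : ℝ} (ha0 : 0 ≤ a) (ha1 : a ≤ 1) :
    ⌊k * (1 - a)⌋₊ + ⌈k * a⌉.toNat ≤ k := by
  have hfloor : (⌊k * (1 - a)⌋₊ : ℝ) ≤ k * (1 - a) :=
    Nat.floor_le (mul_nonneg k.cast_nonneg (sub_nonneg.mpr ha1))
  have hceil : (⌈k * a⌉ : ℝ) < k * a + 1 := Int.ceil_lt_add_one _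
  have hsum : (⌊k * (1 - a)⌋₊ : ℤ) + ⌈k * a⌉ < k + 1 := by
    have : ((⌊k * (1 - a)⌋₊ : ℤ) : ℝ) + ⌈k * a⌉ < (k : ℤ) + 1 := by push_cast; linarith
    exact_mod_cast this
  have hceil0 : 0 ≤ ⌈k * a⌉ := Int.ceil_nonneg (mul_nonneg k.cast_nonneg ha0)
  omega

namespace Born

theorem tendstoPiAdic_pow {V : Type u} [CommRing V] (π : V) {φ : ℕ → ℕ}
    (hφ : Tendsto φ atTop atTop) : TendstoPiAdic π fun n => π ^ φ n := fun m =>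
  (tendsto_atTop_atTop.mp hφ m).imp fun _ h n hn => pow_dvd_pow π (h n hn)

section Neumann

variable {V : Type u} [CommRing V] {R : Type v} [Ring R] [Algebra V R] {π : V}

theorem SConvTo.const_mul {S : Set R} {x : ℕ → R} {l : R} (h : SConvTo π S x l) (c : R) :
    SConvTo π ({c} * S) (fun n => c * x n) (c * l) := by
  obtain ⟨δ, hδ, hx⟩ := h
  refine ⟨δ, hδ, fun n => ?_⟩
  obtain ⟨y, hy, hyx⟩ := Set.mem_smul_set.mp (hx n)
  refine Set.mem_smul_set.mpr ⟨c * y, Set.mul_mem_mul rfl hy, ?_⟩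
  rw [← mul_smul_comm, hyx, mul_sub]

theorem SConvTo.mul_const {S : Set R} {x : ℕ → R} {l : R} (h : SConvTo π S x l) (c : R) :
    SConvTo π (S * {c}) (fun n => x n * c) (l * c) := by
  obtain ⟨δ, hδ, hx⟩ := h
  refine ⟨δ, hδ, fun n => ?_⟩
  obtain ⟨y, hy, hyx⟩ := Set.mem_smul_set.mp (hx n)
  refine Set.mem_smul_set.mpr ⟨y * c, Set.mul_mem_mul hy rfl, ?_⟩
  rw [← smul_mul_assoc, hyx, sub_mul]

variable {N : Submodule V R} {w : R} {φ : ℕ → ℕ}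

theorem sConvTo_one_sub_pow (hφ : Tendsto φ atTop atTop) (hw : ∀ k, w ^ k ∈ π ^ φ k • N) :
    SConvTo π (N : Set R) (fun n => 1 - w ^ n) 1 := by
  refine ⟨_, tendstoPiAdic_pow π hφ, fun n => ?_⟩
  rw [← Submodule.coe_pointwise_smul, SetLike.mem_coe, sub_sub_cancel_left]
  exact neg_mem (hw n)

theorem sCauchy_geom_sum (hφm : Monotone φ) (hφ : Tendsto φ atTop atTop)
    (hw : ∀ k, w ^ k ∈ π ^ φ k • N) :
    SCauchy π (N : Set R) fun n => ∑ i ∈ range n, w ^ i := by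
  have tail : ∀ l m n, l ≤ m → m ≤ n →
      ∑ i ∈ range n, w ^ i - ∑ i ∈ range m, w ^ i ∈ π ^ φ l • N := by
    intro l m n hlm hmn
    rw [← sum_Ico_eq_sub _ hmn]
    refine Submodule.sum_mem _ fun k hk => ?_
    have hlk : φ l ≤ φ k := hφm (hlm.trans (mem_Ico.mp hk).1)
    exact Submodule.pointwise_smul_le_of_dvd (pow_dvd_pow π hlk) N (hw k)
  refine ⟨_, tendstoPiAdic_pow π hφ, fun l n m hn hm => ?_⟩
  rw [← Submodule.coe_pointwise_smul, SetLike.mem_coe]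
  rcases le_total m n with h | h
  · exact tail l m n hm h
  · rw [← neg_sub]
    exact neg_mem (tail l n m hn h)

variable {𝓑 : ModBornology V R}

theorem isUnit_one_sub_of_pow_mem_smul (h𝓑 : IsAlgBorn 𝓑) (h𝓑c : BornComplete π 𝓑)
    (hN : 𝓑.IsBounded (N : Set R)) (hφm : Monotone φ) (hφ : Tendsto φ atTop atTop)
    (hw : ∀ k, w ^ k ∈ π ^ φ k • N) : IsUnit (1 - w) := by
  obtain ⟨hsep, hcomp⟩ := h𝓑c
  obtain ⟨S, hS, hlim⟩ := hcomp N hN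
  obtain ⟨L, hL⟩ := hlim _ (sCauchy_geom_sum hφm hφ hw)
  have hbdd : 𝓑.IsBounded {1 - w} := 𝓑.isBounded_of_finite (Set.finite_singleton _)
  have hone : ConvTo π 𝓑 (fun n => 1 - w ^ n) 1 := ⟨N, hN, sConvTo_one_sub_pow hφ hw⟩
  have hright : (1 - w) * L = 1 := hsep _ _ _ ⟨_, h𝓑 hbdd hS, hL.const_mul (1 - w)⟩
    (by simpa only [mul_neg_geom_sum] using hone)
  have hleft : L * (1 - w) = 1 := hsep _ _ _ ⟨_, h𝓑 hS hbdd, hL.mul_const (1 - w)⟩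
    (by simpa only [geom_sum_mul_neg] using hone)
  exact ⟨⟨1 - w, L, hright, hleft⟩, rfl⟩

theorem isUnit_one_sub_of_pow_mem_smul_floor (h𝓑 : IsAlgBorn 𝓑) (h𝓑c : BornComplete π 𝓑)
    (hN : 𝓑.IsBounded (N : Set R)) {b : ℝ} (hb : 0 < b)
    (hw : ∀ k : ℕ, w ^ k ∈ π ^ ⌊k * b⌋₊ • N) :
    IsUnit (1 - w) :=
  isUnit_one_sub_of_pow_mem_smul h𝓑 h𝓑c hN
    (fun _ _ h => Nat.floor_mono (mul_le_mul_of_nonneg_right (Nat.cast_le.mpr h) hb.le))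
    (tendsto_nat_floor_atTop.comp (tendsto_natCast_atTop_atTop.atTop_mul_const hb)) hw

end Neumann

theorem cexp_zpow_neg (ε r : ℝ) (k : ℕ) :
    cexp ε (r ^ (-(k : ℤ))) = ⌈k * (Real.log r / Real.log ε⁻¹)⌉ := by
  rw [cexp, Real.log_zpow, Real.log_inv]
  congr 1
  push_cast
  ring

section VAlgebra

variable {V : Type u} [CommRing V] {R : Type v} [Ring R] [Algebra V R]
  {π : V} {ε r : ℝ} {M : Submodule V R}

theorem pow_smul_pow_mem_geomSumV {z : R} (hz : z ∈ M) (k : ℕ) :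
    π ^ (cexp ε (r ^ (-(k : ℤ)))).toNat • z ^ k ∈ geomSumV π ε r M :=
  le_iSup (fun n : ℕ => starV π ε (r ^ (-(n : ℤ))) (M ^ n)) k
    (Submodule.smul_mem_pointwise_smul _ _ _ (Submodule.pow_mem_pow M hz k))

theorem isUnit_one_sub_smul_of_isBounded_geomSumV {𝓑 : ModBornology V R} (h𝓑 : IsAlgBorn 𝓑)
    (h𝓑c : BornComplete π 𝓑) (hε0 : 0 < ε) (hε1 : ε < 1) (hr1 : 1 ≤ r) (hrε : r < ε⁻¹)
    (hbdd : 𝓑.IsBounded (geomSumV π ε r M : Set R)) {z : R} (hz : z ∈ M) :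
    IsUnit (1 - algebraMap V R π * z) := by
  set a := Real.log r / Real.log ε⁻¹
  have hlog := Real.log_inv_pos hε0 hε1
  have ha0 : 0 ≤ a := div_nonneg (Real.log_nonneg hr1) hlog.le
  have ha1 : a < 1 := (div_lt_one hlog).mpr (Real.log_lt_log (by linarith) hrε)
  refine isUnit_one_sub_of_pow_mem_smul_floor h𝓑 h𝓑c hbdd (sub_pos.mpr ha1) fun k => ?_
  set e := ⌈k * a⌉.toNat
  have hle := floor_mul_one_sub_add_ceil_mul_le k ha0 ha1.le
  have hsplit : π ^ k = π ^ (k - e) * π ^ e := by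
    rw [← pow_add, Nat.sub_add_cancel (by omega)]
  have hmem : π ^ e • z ^ k ∈ geomSumV π ε r M := by
    simpa only [cexp_zpow_neg] using
      pow_smul_pow_mem_geomSumV (π := π) (ε := ε) (r := r) hz k
  rw [← Algebra.smul_def, smul_pow, hsplit, mul_smul]
  exact Submodule.pointwise_smul_le_of_dvd (pow_dvd_pow π (by omega)) _
    (Submodule.smul_mem_pointwise_smul _ _ _ hmem)

end VAlgebra

section KAlgebra

variable {V : Type u} [CommRing V] {K : Type u} [Field K] [Algebra V K]
  {A : Type v} [Ring A] [Algebra K A] [Algebra V A] [IsScalarTower V K A]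
  {π : V} {ε r : ℝ} {M : Submodule V A}

theorem zpow_smul_pow_mem_geomSumK {z : A} (hz : z ∈ M) (k : ℕ) :
    algebraMap V K π ^ cexp ε (r ^ (-(k : ℤ))) • z ^ k ∈ geomSumK K π ε r M :=
  le_iSup (fun n : ℕ => starK K π ε (r ^ (-(n : ℤ))) (M ^ n)) k
    (Submodule.mem_map_of_mem (Submodule.pow_mem_pow M hz k))

theorem exists_isBounded_geomSumK_of_specRad_lt_one {𝓒 : ModBornology V A}
    (h : specRad K π ε 𝓒 M < 1) :
    ∃ r : ℝ, 0 < r ∧ r < 1 ∧ 𝓒.IsBounded (geomSumK K π ε r M : Set A) := by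
  obtain ⟨_, ⟨r, hr0, rfl, hbdd⟩, hlt⟩ := sInf_lt_iff.mp h
  exact ⟨r, hr0, ENNReal.ofReal_lt_one.mp hlt, hbdd⟩

theorem isUnit_one_sub_of_isBounded_geomSumK {𝓒 : ModBornology V A} (h𝓒 : IsAlgBorn 𝓒)
    (h𝓒c : BornComplete π 𝓒) (hπ : algebraMap V K π ≠ 0) (hε0 : 0 < ε) (hε1 : ε < 1)
    (hr0 : 0 < r) (hr1 : r < 1) (hbdd : 𝓒.IsBounded (geomSumK K π ε r M : Set A))
    {z : A} (hz : z ∈ M) : IsUnit (1 - z) := by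
  set b := -(Real.log r / Real.log ε⁻¹)
  have hb : 0 < b :=
    neg_pos.mpr (div_neg_of_neg_of_pos (Real.log_neg hr0 hr1) (Real.log_inv_pos hε0 hε1))
  refine isUnit_one_sub_of_pow_mem_smul_floor h𝓒 h𝓒c hbdd hb fun k => ?_
  set n := ⌊k * b⌋₊
  have hexp : cexp ε (r ^ (-(k : ℤ))) = -(n : ℤ) := by
    rw [cexp_zpow_neg, Int.natCast_floor_eq_floor (mul_nonneg k.cast_nonneg hb.le),
      ← Int.ceil_neg, ← mul_neg, neg_neg]
  have hmem := zpow_smul_pow_mem_geomSumK (K := K) (π := π) (ε := ε) (r := r) hz k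
  rw [hexp] at hmem
  have hz_eq : z ^ k = π ^ n • (algebraMap V K π ^ (-(n : ℤ)) • z ^ k) := by
    rw [← algebraMap_smul K, map_pow, smul_smul, ← zpow_natCast, ← zpow_add₀ hπ,
      add_neg_cancel, zpow_zero, one_smul]
  rw [hz_eq]
  exact Submodule.smul_mem_pointwise_smul _ _ _ hmem

end KAlgebra

end Born

theorem neumann_series_invertibility_general
    {V : Type u} [CommRing V]
    (π : V) (hπ : Irreducible π)
    (K : Type u) [Field K] [Algebra V K] [IsFractionRing V K]
    (ε : ℝ) (hε0 : 0 < ε) (hε1 : ε < 1)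
    -- the complete bornological `V`-algebra `R`
    {R : Type v} [Ring R] [Algebra V R]
    (𝓑 : ModBornology V R) (h𝓑 : IsAlgBorn 𝓑) (h𝓑c : BornComplete π 𝓑)
    (M : Submodule V R)
    (hρ : ∃ r : ℝ, 1 ≤ r ∧ r < ε⁻¹ ∧ 𝓑.IsBounded (geomSumV π ε r M : Set R))
    -- the complete bornological `K`-algebra `A`
    {A : Type v} [Ring A] [Algebra K A] [Algebra V A] [IsScalarTower V K A]
    (𝓒 : ModBornology V A) (h𝓒 : IsKAlgBorn K π 𝓒) (h𝓒c : BornComplete π 𝓒)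
    (M' : Submodule V A)
    (hρ' : specRad K π ε 𝓒 M' < 1) :
    (∀ z ∈ M, IsUnit (1 - algebraMap V R π * z)) ∧
    (∀ z ∈ M', IsUnit (1 - z)) := by
  obtain ⟨r, hr1, hrε, hbdd⟩ := hρ
  obtain ⟨r', hr'0, hr'1, hbdd'⟩ := exists_isBounded_geomSumK_of_specRad_lt_one hρ'
  have hπK : algebraMap V K π ≠ 0 :=
    (map_ne_zero_iff _ (IsFractionRing.injective V K)).mpr hπ.ne_zero
  exact ⟨fun z hz =>
      isUnit_one_sub_smul_of_isBounded_geomSumV h𝓑 h𝓑c hε0 hε1 hr1 hrε hbdd hz,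
    fun z hz =>
      isUnit_one_sub_of_isBounded_geomSumK h𝓒.1 h𝓒c hπK hε0 hε1 hr'0 hr'1 hbdd' hz⟩

/-- **Statement 6.** If `R` is a complete bornological `V`-algebra and `M ⊆ R` a bounded
`V`-submodule with `ρ(M) < ε⁻¹`, then `1 − πz` is invertible in `R` for every `z ∈ M`.
If `A` is a complete bornological `K`-algebra and `M' ⊆ A` a bounded `V`-submodule with
`ρ(M') < 1`, then `1 − z` is invertible in `A` for every `z ∈ M'`. -/
theorem neumann_series_invertibility
    {V : Type u} [CommRing V] [IsDomain V] [IsDiscreteValuationRing V]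
    (π : V) (hπ : Irreducible π) (hV : IsAdicComplete (Ideal.span {π}) V)
    (K : Type u) [Field K] [Algebra V K] [IsFractionRing V K]
    (ε : ℝ) (hε0 : 0 < ε) (hε1 : ε < 1)
    -- the complete bornological `V`-algebra `R`
    {R : Type v} [Ring R] [Algebra V R]
    (𝓑 : ModBornology V R) (h𝓑 : IsAlgBorn 𝓑) (h𝓑c : BornComplete π 𝓑)
    (M : Submodule V R) (hM : 𝓑.IsBounded (M : Set R))
    (hρ : ∃ r : ℝ, 1 ≤ r ∧ r < ε⁻¹ ∧ 𝓑.IsBounded (geomSumV π ε r M : Set R))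
    -- the complete bornological `K`-algebra `A`
    {A : Type v} [Ring A] [Algebra K A] [Algebra V A] [IsScalarTower V K A]
    (𝓒 : ModBornology V A) (h𝓒 : IsKAlgBorn K π 𝓒) (h𝓒c : BornComplete π 𝓒)
    (M' : Submodule V A) (hM' : 𝓒.IsBounded (M' : Set A))
    (hρ' : specRad K π ε 𝓒 M' < 1) :
    (∀ z ∈ M, IsUnit (1 - algebraMap V R π * z)) ∧
    (∀ z ∈ M', IsUnit (1 - z)) :=
  neumann_series_invertibility_general π hπ K ε hε0 hε1 𝓑 h𝓑 h𝓑c M hρ 𝓒 h𝓒 h𝓒c M' hρ'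
end

section
/- Let R and S be bornological V-algebras. Assume S is complete and that ρ(M) ≤ 1 for every bounded V-submodule M of S. Then every bounded unital algebra homomorphism R → S extends uniquely, through the canonical map R → R^lg, to a bounded unital homomorphism R^lg → S, where R^lg denotes the linear growth completion of R. Moreover, if ρ(M) ≤ 1 for every bounded V-submodule M of R, then the linear growth bornology of R coincides with its given bornology. -/
open Pointwise

universe u v w

namespace Born

variable {V : Type u} [CommRing V] {X : Type v} [AddCommGroup X] [Module V X]
  {C : Type w} [AddCommGroup C] [Module V C]

/-- `(C, 𝓑C, ι)` is *the* (bornological) completion of `(X, 𝓑X)`: `C` is complete, `ι` is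
bounded, and every bounded linear map from `X` to a complete bornological `V`-module
factors uniquely through `ι`. -/
def IsCompletion (π : V) (𝓑X : ModBornology V X) (𝓑C : ModBornology V C)
    (ι : X →ₗ[V] C) : Prop :=
  BornComplete π 𝓑C ∧ BoundedMap 𝓑X 𝓑C ι ∧
    ∀ (Y : Type (max u v w)) (_ : AddCommGroup Y) (_ : Module V Y) (𝓑Y : ModBornology V Y),
      BornComplete π 𝓑Y → ∀ f : X →ₗ[V] Y, BoundedMap 𝓑X 𝓑Y f →
        ∃! g : C →ₗ[V] Y, BoundedMap 𝓑C 𝓑Y g ∧ g.comp ι = f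

end Born

namespace Born

variable {V : Type u} [CommRing V] {A : Type v} [Ring A] [Algebra V A]

/-- `𝓑 ≤ 𝓒` for bornologies: every `𝓑`-bounded set is `𝓒`-bounded. -/
def BornLE (𝓑 𝓒 : ModBornology V A) : Prop :=
  ∀ ⦃s : Set A⦄, 𝓑.IsBounded s → 𝓒.IsBounded s

/-- `𝓛` is the linear growth bornology of the bornological `V`-algebra `(A, 𝓑)`:
the smallest algebra bornology containing `𝓑` all of whose bounded `V`-submodules have
spectral radius at most `1`. -/
noncomputable def IsLinGrowthBorn (π : V) (ε : ℝ) (𝓑 𝓛 : ModBornology V A) : Prop :=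
  IsAlgBorn 𝓛 ∧ BornLE 𝓑 𝓛 ∧
  (∀ M : Submodule V A, 𝓛.IsBounded (M : Set A) → SpecLeOne π ε 𝓛 M) ∧
  ∀ 𝓒 : ModBornology V A, IsAlgBorn 𝓒 → BornLE 𝓑 𝓒 →
    (∀ M : Submodule V A, 𝓒.IsBounded (M : Set A) → SpecLeOne π ε 𝓒 M) → BornLE 𝓛 𝓒

end Born

/-!
A bounded homomorphism `f : R → S` is also bounded for the linear growth bornology, because the
pullback of the bornology of `S` along `f` is one of the algebra bornologies over which `𝓛` is
minimal. The completion then extends `f` to a unique bounded linear map `g`, and `g` is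
multiplicative because bounded maps out of the completion are determined by their restriction
to `R`.
-/

namespace ModBornology

variable {V : Type u} [CommRing V] {X : Type v} [AddCommGroup X] [Module V X]
  {Y : Type w} [AddCommGroup Y] [Module V Y]

def comap (f : X →ₗ[V] Y) (𝓑 : ModBornology V Y) : ModBornology V X where
  IsBounded s := 𝓑.IsBounded (f '' s)
  isBounded_of_finite _ hs := 𝓑.isBounded_of_finite (hs.image f)
  isBounded_subset _ _ ht hst := 𝓑.isBounded_subset ht (Set.image_mono hst)
  isBounded_union s t hs ht := by
    simpa only [Set.image_union] using 𝓑.isBounded_union hs ht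
  isBounded_span s hs := by
    simpa only [← Submodule.map_coe, Submodule.map_span] using 𝓑.isBounded_span hs

@[simp]
lemma comap_isBounded {f : X →ₗ[V] Y} {𝓑 : ModBornology V Y} {s : Set X} :
    (𝓑.comap f).IsBounded s ↔ 𝓑.IsBounded (f '' s) :=
  Iff.rfl

end ModBornology

namespace Born

section Module

variable {V : Type u} [CommRing V] {X : Type v} [AddCommGroup X] [Module V X]
  {Y : Type w} [AddCommGroup Y] [Module V Y] {Z : Type*} [AddCommGroup Z] [Module V Z]
  {π : V} {𝓑X : ModBornology V X} {𝓑Y : ModBornology V Y} {𝓑Z : ModBornology V Z}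

lemma BoundedMap.comp {g : Y →ₗ[V] Z} {f : X →ₗ[V] Y} (hg : BoundedMap 𝓑Y 𝓑Z g)
    (hf : BoundedMap 𝓑X 𝓑Y f) : BoundedMap 𝓑X 𝓑Z (g ∘ₗ f) := fun _ hs => by
  simpa only [LinearMap.coe_comp, Set.image_comp] using hg (hf hs)

lemma boundedMap_comap_iff {f : Y →ₗ[V] Z} {h : X →ₗ[V] Y} :
    BoundedMap 𝓑X (𝓑Z.comap f) h ↔ BoundedMap 𝓑X 𝓑Z (f ∘ₗ h) := by
  simp only [BoundedMap, ModBornology.comap_isBounded, LinearMap.coe_comp, Set.image_comp]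

lemma SConvTo.map (f : X →ₗ[V] Y) {S : Set X} {x : ℕ → X} {l : X} (h : SConvTo π S x l) :
    SConvTo π (f '' S) (f ∘ x) (f l) := by
  obtain ⟨δ, hδ, hx⟩ := h
  refine ⟨δ, hδ, fun n => ?_⟩
  rw [Function.comp_apply, ← map_sub, ← image_smul_set]
  exact Set.mem_image_of_mem f (hx n)

lemma SCauchy.map (f : X →ₗ[V] Y) {S : Set X} {x : ℕ → X} (h : SCauchy π S x) :
    SCauchy π (f '' S) (f ∘ x) := by
  obtain ⟨δ, hδ, hx⟩ := h
  refine ⟨δ, hδ, fun l n m hn hm => ?_⟩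
  rw [Function.comp_apply, Function.comp_apply, ← map_sub, ← image_smul_set]
  exact Set.mem_image_of_mem f (hx l n m hn hm)

lemma BornComplete.comap_equiv (e : X ≃ₗ[V] Y) (h : BornComplete π 𝓑Y) :
    BornComplete π (𝓑Y.comap e.toLinearMap) := by
  refine ⟨fun x l₁ l₂ ⟨S₁, hS₁, hx₁⟩ ⟨S₂, hS₂, hx₂⟩ => e.injective ?_, fun S hS => ?_⟩
  · exact h.1 _ _ _ ⟨_, hS₁, hx₁.map e.toLinearMap⟩ ⟨_, hS₂, hx₂.map e.toLinearMap⟩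
  · obtain ⟨S', hS', hconv⟩ := h.2 _ hS
    refine ⟨e.symm '' S', by simpa [Set.image_image] using hS', fun x hx => ?_⟩
    obtain ⟨l, hl⟩ := hconv _ (hx.map e.toLinearMap)
    refine ⟨e.symm l, ?_⟩
    simpa [Function.comp_def] using hl.map e.symm.toLinearMap

end Module

section Completion

variable {V : Type u} [CommRing V] {X : Type v} [AddCommGroup X] [Module V X]
  {C : Type w} [AddCommGroup C] [Module V C] {Y : Type w} [AddCommGroup Y] [Module V Y]
  {π : V} {𝓑X : ModBornology V X} {𝓑C : ModBornology V C} {𝓑Y : ModBornology V Y}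
  {ι : X →ₗ[V] C}

/-- `IsCompletion` only quantifies over targets in the universe `max u v w`; lifting `Y` there
by `ULift` gives the universal property for targets in the universe of `C`. -/
lemma IsCompletion.existsUnique_lift (hC : IsCompletion π 𝓑X 𝓑C ι) (hY : BornComplete π 𝓑Y)
    {f : X →ₗ[V] Y} (hf : BoundedMap 𝓑X 𝓑Y f) :
    ∃! g : C →ₗ[V] Y, BoundedMap 𝓑C 𝓑Y g ∧ g ∘ₗ ι = f := by
  let e : ULift.{max u v} Y ≃ₗ[V] Y := ULift.moduleEquiv
  obtain ⟨g, ⟨hgb, hgf⟩, hg⟩ := hC.2.2 _ _ _ (𝓑Y.comap e.toLinearMap) (hY.comap_equiv e)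
    (e.symm.toLinearMap ∘ₗ f)
    (boundedMap_comap_iff.2 (by rwa [← LinearMap.comp_assoc, e.comp_symm, LinearMap.id_comp]))
  refine ⟨e.toLinearMap ∘ₗ g, ⟨boundedMap_comap_iff.1 hgb, ?_⟩, fun g' ⟨hg'b, hg'f⟩ => ?_⟩
  · rw [LinearMap.comp_assoc, hgf, ← LinearMap.comp_assoc, e.comp_symm, LinearMap.id_comp]
  · have hg' := hg (e.symm.toLinearMap ∘ₗ g')
      ⟨boundedMap_comap_iff.2 (by rwa [← LinearMap.comp_assoc, e.comp_symm, LinearMap.id_comp]),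
        by rw [LinearMap.comp_assoc, hg'f]⟩
    rw [← hg', ← LinearMap.comp_assoc, e.comp_symm, LinearMap.id_comp]

lemma IsCompletion.ext (hC : IsCompletion π 𝓑X 𝓑C ι) (hY : BornComplete π 𝓑Y)
    {g₁ g₂ : C →ₗ[V] Y} (hg₁ : BoundedMap 𝓑C 𝓑Y g₁) (hg₂ : BoundedMap 𝓑C 𝓑Y g₂)
    (h : g₁ ∘ₗ ι = g₂ ∘ₗ ι) : g₁ = g₂ :=
  (hC.existsUnique_lift hY (hg₁.comp hC.2.1)).unique ⟨hg₁, rfl⟩ ⟨hg₂, h.symm⟩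

end Completion

section Algebra

variable {V : Type u} [CommRing V] {R : Type v} [Ring R] [Algebra V R]
  {A : Type w} [Ring A] [Algebra V A] {π : V} {ε : ℝ}

lemma IsAlgBorn.boundedMap_mulLeft {𝓑 : ModBornology V A} (h : IsAlgBorn 𝓑) (a : A) :
    BoundedMap 𝓑 𝓑 (LinearMap.mulLeft V a) := fun s hs => by
  have := h (𝓑.isBounded_of_finite (Set.finite_singleton a)) hs
  rwa [Set.singleton_mul] at this

lemma IsAlgBorn.boundedMap_mulRight {𝓑 : ModBornology V A} (h : IsAlgBorn 𝓑) (a : A) :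
    BoundedMap 𝓑 𝓑 (LinearMap.mulRight V a) := fun s hs => by
  have := h hs (𝓑.isBounded_of_finite (Set.finite_singleton a))
  rwa [Set.mul_singleton] at this

lemma IsAlgBorn.comap {𝓑 : ModBornology V A} (h : IsAlgBorn 𝓑) (f : R →ₐ[V] A) :
    IsAlgBorn (𝓑.comap f.toLinearMap) := fun s t hs ht => by
  simpa only [ModBornology.comap_isBounded, AlgHom.coe_toLinearMap, Set.image_mul] using h hs ht

lemma geomSumV_map (f : R →ₐ[V] A) (r : ℝ) (M : Submodule V R) :
    (geomSumV π ε r M).map f.toLinearMap = geomSumV π ε r (M.map f.toLinearMap) := by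
  simp only [geomSumV, starV, Submodule.map_iSup, Submodule.map_pointwise_smul, Submodule.map_pow]

lemma SpecLeOne.comap {𝓑 : ModBornology V A} {f : R →ₐ[V] A} {M : Submodule V R}
    (h : SpecLeOne π ε 𝓑 (M.map f.toLinearMap)) : SpecLeOne π ε (𝓑.comap f.toLinearMap) M :=
  fun r hr => by
    simpa only [ModBornology.comap_isBounded, ← Submodule.map_coe, geomSumV_map] using h r hr

end Algebra

section LinearGrowth

variable {V : Type u} [CommRing V] {R : Type v} [Ring R] [Algebra V R]
  {A : Type w} [Ring A] [Algebra V A] {π : V} {ε : ℝ} {𝓑 𝓛 : ModBornology V R}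

lemma IsLinGrowthBorn.boundedMap_of_specLeOne (h𝓛 : IsLinGrowthBorn π ε 𝓑 𝓛)
    {𝓑A : ModBornology V A} (hA : IsAlgBorn 𝓑A)
    (hAρ : ∀ M : Submodule V A, 𝓑A.IsBounded (M : Set A) → SpecLeOne π ε 𝓑A M)
    {f : R →ₐ[V] A} (hf : BoundedMap 𝓑 𝓑A f.toLinearMap) : BoundedMap 𝓛 𝓑A f.toLinearMap :=
  h𝓛.2.2.2 _ (hA.comap f) hf fun M hM =>
    SpecLeOne.comap (hAρ _ (by rwa [Submodule.map_coe]))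

lemma IsLinGrowthBorn.isBounded_iff_of_specLeOne (h𝓛 : IsLinGrowthBorn π ε 𝓑 𝓛)
    (h𝓑 : IsAlgBorn 𝓑)
    (hρ : ∀ M : Submodule V R, 𝓑.IsBounded (M : Set R) → SpecLeOne π ε 𝓑 M) (s : Set R) :
    𝓛.IsBounded s ↔ 𝓑.IsBounded s :=
  ⟨fun hs => h𝓛.2.2.2 𝓑 h𝓑 (fun _ h => h) hρ hs, fun hs => h𝓛.2.1 hs⟩

end LinearGrowth

section AlgebraCompletion

variable {V : Type u} [CommRing V] {R : Type v} [Ring R] [Algebra V R]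
  {C : Type w} [Ring C] [Algebra V C] {S : Type w} [Ring S] [Algebra V S] {π : V}
  {𝓛 : ModBornology V R} {𝓑C : ModBornology V C} {𝓑S : ModBornology V S} {ι : R →ₐ[V] C}

/-- Both `g (ι r * ·)` and `f r * g ·` are bounded extensions of `f (r * ·)`, hence equal; then
both `g (· * y)` and `g · * g y` are bounded extensions of `g (ι · * y)`. -/
lemma IsCompletion.map_mul_of_comp_eq (hC : IsCompletion π 𝓛 𝓑C ι.toLinearMap)
    (h𝓑C : IsAlgBorn 𝓑C) (h𝓑S : IsAlgBorn 𝓑S) (hS : BornComplete π 𝓑S)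
    {g : C →ₗ[V] S} (hg : BoundedMap 𝓑C 𝓑S g) {f : R →ₐ[V] S}
    (hgf : g ∘ₗ ι.toLinearMap = f.toLinearMap) (x y : C) : g (x * y) = g x * g y := by
  have hgι (r : R) : g (ι r) = f r := LinearMap.congr_fun hgf r
  have hleft (r : R) : g ∘ₗ LinearMap.mulLeft V (ι r) = LinearMap.mulLeft V (f r) ∘ₗ g :=
    hC.ext hS (hg.comp (h𝓑C.boundedMap_mulLeft _)) ((h𝓑S.boundedMap_mulLeft _).comp hg) <| by
      ext r'
      simp [← map_mul, hgι]
  have hright : g ∘ₗ LinearMap.mulRight V y = LinearMap.mulRight V (g y) ∘ₗ g :=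
    hC.ext hS (hg.comp (h𝓑C.boundedMap_mulRight _)) ((h𝓑S.boundedMap_mulRight _).comp hg) <| by
      ext r
      simpa [hgι] using LinearMap.congr_fun (hleft r) y
  simpa using LinearMap.congr_fun hright x

lemma IsCompletion.existsUnique_algHom_lift (hC : IsCompletion π 𝓛 𝓑C ι.toLinearMap)
    (h𝓑C : IsAlgBorn 𝓑C) (h𝓑S : IsAlgBorn 𝓑S) (hS : BornComplete π 𝓑S)
    {f : R →ₐ[V] S} (hf : BoundedMap 𝓛 𝓑S f.toLinearMap) :
    ∃! g : C →ₐ[V] S, BoundedMap 𝓑C 𝓑S g.toLinearMap ∧ g.comp ι = f := by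
  obtain ⟨g, ⟨hgb, hgf⟩, hg⟩ := hC.existsUnique_lift hS hf
  have hg1 : g 1 = 1 := by simpa using LinearMap.congr_fun hgf 1
  refine ⟨AlgHom.ofLinearMap g hg1 (hC.map_mul_of_comp_eq h𝓑C h𝓑S hS hgb hgf),
    ⟨hgb, AlgHom.toLinearMap_injective hgf⟩, fun g' ⟨hg'b, hg'f⟩ => ?_⟩
  exact AlgHom.toLinearMap_injective (hg _ ⟨hg'b, congrArg AlgHom.toLinearMap hg'f⟩)

end AlgebraCompletion

end Born

open Born

theorem linearGrowthCompletion_universal_property_general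
    {V : Type u} [CommRing V]
    (π : V)
    (ε : ℝ)
    -- the bornological `V`-algebra `R` with its linear growth bornology `𝓛`
    {R : Type v} [Ring R] [Algebra V R]
    (𝓑 : ModBornology V R) (h𝓑 : IsAlgBorn 𝓑)
    (𝓛 : ModBornology V R) (h𝓛 : IsLinGrowthBorn π ε 𝓑 𝓛)
    -- the linear growth completion `C = R^lg`
    {C : Type w} [Ring C] [Algebra V C]
    (𝓑C : ModBornology V C) (h𝓑C : IsAlgBorn 𝓑C) (ι : R →ₐ[V] C)
    (hC : IsCompletion π 𝓛 𝓑C ι.toLinearMap)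
    -- the complete bornological `V`-algebra `S` with all spectral radii at most one
    {S : Type w} [Ring S] [Algebra V S]
    (𝓑S : ModBornology V S) (h𝓑S : IsAlgBorn 𝓑S) (hScompl : BornComplete π 𝓑S)
    (hSρ : ∀ M : Submodule V S, 𝓑S.IsBounded (M : Set S) → SpecLeOne π ε 𝓑S M) :
    (∀ f : R →ₐ[V] S, BoundedMap 𝓑 𝓑S f.toLinearMap →
      ∃! g : C →ₐ[V] S, BoundedMap 𝓑C 𝓑S g.toLinearMap ∧ g.comp ι = f)
    ∧ ((∀ M : Submodule V R, 𝓑.IsBounded (M : Set R) → SpecLeOne π ε 𝓑 M) →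
        ∀ s : Set R, 𝓛.IsBounded s ↔ 𝓑.IsBounded s) :=
  ⟨fun _ hf => hC.existsUnique_algHom_lift h𝓑C h𝓑S hScompl
      (h𝓛.boundedMap_of_specLeOne h𝓑S hSρ hf),
    h𝓛.isBounded_iff_of_specLeOne h𝓑⟩

/-- **Statement 8.** Let `R` and `S` be bornological `V`-algebras, with `S` complete and
`ρ(M) ≤ 1` for every bounded `V`-submodule `M` of `S`.  Then every bounded unital algebra
homomorphism `R → S` extends uniquely through the canonical map `R → R^lg` to a bounded
unital homomorphism `R^lg → S`, where `R^lg` is the linear growth completion of `R`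
(that is, the completion of `R` with respect to its linear growth bornology `𝓛`).
Moreover, if `ρ(M) ≤ 1` for every bounded `V`-submodule `M` of `R`, then the linear
growth bornology of `R` coincides with its given bornology. -/
theorem linearGrowthCompletion_universal_property
    {V : Type u} [CommRing V] [IsDomain V] [IsDiscreteValuationRing V]
    (π : V) (hπ : Irreducible π) (hV : IsAdicComplete (Ideal.span {π}) V)
    (ε : ℝ) (hε0 : 0 < ε) (hε1 : ε < 1)
    -- the bornological `V`-algebra `R` with its linear growth bornology `𝓛`
    {R : Type v} [Ring R] [Algebra V R]
    (𝓑 : ModBornology V R) (h𝓑 : IsAlgBorn 𝓑)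
    (𝓛 : ModBornology V R) (h𝓛 : IsLinGrowthBorn π ε 𝓑 𝓛)
    -- the linear growth completion `C = R^lg`
    {C : Type w} [Ring C] [Algebra V C]
    (𝓑C : ModBornology V C) (h𝓑C : IsAlgBorn 𝓑C) (ι : R →ₐ[V] C)
    (hC : IsCompletion π 𝓛 𝓑C ι.toLinearMap)
    -- the complete bornological `V`-algebra `S` with all spectral radii at most one
    {S : Type w} [Ring S] [Algebra V S]
    (𝓑S : ModBornology V S) (h𝓑S : IsAlgBorn 𝓑S) (hScompl : BornComplete π 𝓑S)
    (hSρ : ∀ M : Submodule V S, 𝓑S.IsBounded (M : Set S) → SpecLeOne π ε 𝓑S M) :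
    (∀ f : R →ₐ[V] S, BoundedMap 𝓑 𝓑S f.toLinearMap →
      ∃! g : C →ₐ[V] S, BoundedMap 𝓑C 𝓑S g.toLinearMap ∧ g.comp ι = f)
    ∧ ((∀ M : Submodule V R, 𝓑.IsBounded (M : Set R) → SpecLeOne π ε 𝓑 M) →
        ∀ s : Set R, 𝓛.IsBounded s ↔ 𝓑.IsBounded s) :=
  linearGrowthCompletion_universal_property_general π ε 𝓑 h𝓑 𝓛 h𝓛 𝓑C h𝓑C ι hC 𝓑S h𝓑S hScompl hSρ
end
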